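/- arXiv:1802.00459 — 5 statements merged into one kernel-verified Lean document; each statement's English description precedes it below -/
import Mathlib

section
/- For every i ∈ {1,…,L} and every p ∈ Q_i, the parent cell C = c_{i−1}(p) satisfies |C ∩ Q^I| ≥ T_{i−1}(o)/2. -/
open scoped BigOperators Classical
open MeasureTheory

noncomputable section

/-- Points of `ℝ^d` with the Euclidean distance. -/
abbrev Pt (d : ℕ) := EuclideanSpace ℝ (Fin d)

/-- Side length `g_i = Δ / 2^i` of the grid `G_i`. -/
def gside (Δ : ℕ) (i : ℤ) : ℝ := (Δ : ℝ) / (2 : ℝ) ^ i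

/-- The half-open axis-parallel cube of side length `g` with corner `v + n·g`
(a cell of the shifted grid). -/
def cell (d : ℕ) (v : Pt d) (g : ℝ) (n : Fin d → ℤ) : Set (Pt d) :=
  {x | ∀ α : Fin d, v α + (n α : ℝ) * g ≤ x α ∧ x α < v α + ((n α : ℝ) + 1) * g}

/-- Index of the cell of side length `g` containing the point `p`. -/
def idx (d : ℕ) (v : Pt d) (g : ℝ) (p : Pt d) : Fin d → ℤ :=
  fun α => ⌊(p α - v α) / g⌋

/-- `|C ∩ Q|`, the number of points of `Q` in the given cell. -/
def cellCount (d : ℕ) (Q : Finset (Pt d)) (v : Pt d) (g : ℝ) (n : Fin d → ℤ) : ℕ :=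
  (Q.filter (fun p => p ∈ cell d v g n)).card

/-- The threshold `T_i(o) = (d/g_i)² · o / (100k)`. -/
def Tthr (d k Δ : ℕ) (o : ℝ) (i : ℤ) : ℝ :=
  ((d : ℝ) / gside Δ i) ^ 2 * o / (100 * (k : ℝ))

/-- A cell is heavy iff it is the cell of `G_{-1}` containing `Q`, or it is a nonempty
cell of some `G_i`, `0 ≤ i ≤ L-1`, whose estimate `ẑ` is at least `T_i(o)`. -/
def Heavy (d k L Δ : ℕ) (Q : Finset (Pt d)) (v : Pt d) (o : ℝ)
    (zhat : ℤ → (Fin d → ℤ) → ℝ) (i : ℤ) (n : Fin d → ℤ) : Prop :=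
  (i = -1 ∧ (Q : Set (Pt d)) ⊆ cell d v (gside Δ i) n) ∨
  (0 ≤ i ∧ i ≤ (L : ℤ) - 1 ∧ 0 < cellCount d Q v (gside Δ i) n ∧
    Tthr d k Δ o i ≤ zhat i n)

/-- A cell of `G_i` (`0 ≤ i ≤ L`) is crucial iff it is not heavy but all of its
ancestors are heavy. -/
def Crucial (d k L Δ : ℕ) (Q : Finset (Pt d)) (v : Pt d) (o : ℝ)
    (zhat : ℤ → (Fin d → ℤ) → ℝ) (i : ℤ) (n : Fin d → ℤ) : Prop :=
  0 ≤ i ∧ i ≤ (L : ℤ) ∧ ¬ Heavy d k L Δ Q v o zhat i n ∧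
  ∀ j : ℤ, -1 ≤ j → j < i → ∀ m : Fin d → ℤ,
    cell d v (gside Δ i) n ⊆ cell d v (gside Δ j) m →
      Heavy d k L Δ Q v o zhat j m

/-- `Q_i`, the set of points of `Q` lying in a crucial cell of `G_i`. -/
def Qlevel (d k L Δ : ℕ) (Q : Finset (Pt d)) (v : Pt d) (o : ℝ)
    (zhat : ℤ → (Fin d → ℤ) → ℝ) (i : ℤ) : Finset (Pt d) :=
  Q.filter (fun p => Crucial d k L Δ Q v o zhat i (idx d v (gside Δ i) p))

/-- Accuracy guarantee of the estimation function `ẑ`: for every nonempty cell of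
`G_i`, `0 ≤ i ≤ L-1`, either `|ẑ(C) - |C∩Q|| ≤ 0.1·T_i(o)` or
`0.99·|C∩Q| ≤ ẑ(C) ≤ 1.01·|C∩Q|`. -/
def ZhatAccurate (d k L Δ : ℕ) (Q : Finset (Pt d)) (v : Pt d) (o : ℝ)
    (zhat : ℤ → (Fin d → ℤ) → ℝ) : Prop :=
  ∀ i : ℤ, 0 ≤ i → i ≤ (L : ℤ) - 1 → ∀ n : Fin d → ℤ,
    0 < cellCount d Q v (gside Δ i) n →
      (|zhat i n - (cellCount d Q v (gside Δ i) n : ℝ)| ≤ 0.1 * Tthr d k Δ o i ∨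
        (0.99 * (cellCount d Q v (gside Δ i) n : ℝ) ≤ zhat i n ∧
          zhat i n ≤ 1.01 * (cellCount d Q v (gside Δ i) n : ℝ)))

/-- `γ = ε / (1600·L·d³)`. -/
def gammaPar (d L : ℕ) (ε : ℝ) : ℝ := ε / (1600 * (L : ℝ) * (d : ℝ) ^ 3)

/-- Accuracy guarantee of the estimates `q̂_i` of `|Q_i|`. -/
def QhatAccurate (d k L Δ : ℕ) (Q : Finset (Pt d)) (v : Pt d) (o ε : ℝ)
    (zhat : ℤ → (Fin d → ℤ) → ℝ) (qhat : ℕ → ℝ) : Prop :=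
  ∀ i : ℕ, i ≤ L →
    0 ≤ qhat i ∧
    (|qhat i - ((Qlevel d k L Δ Q v o zhat i).card : ℝ)| ≤
        0.1 * ε * gammaPar d L ε * Tthr d k Δ o i ∨
      ((1 - 0.01 * ε) * ((Qlevel d k L Δ Q v o zhat i).card : ℝ) ≤ qhat i ∧
        qhat i ≤ (1 + 0.01 * ε) * ((Qlevel d k L Δ Q v o zhat i).card : ℝ)))

/-- The set of levels `I = {i ∈ {0,…,L} : q̂_i ≥ γ·T_i(o)}`. -/
def levelI (d k L Δ : ℕ) (o ε : ℝ) (qhat : ℕ → ℝ) : Finset ℕ :=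
  (Finset.range (L + 1)).filter
    (fun i => gammaPar d L ε * Tthr d k Δ o i ≤ qhat i)

/-- `Q^I = ∪_{i ∈ I} Q_i`. -/
def QI (d k L Δ : ℕ) (Q : Finset (Pt d)) (v : Pt d) (o ε : ℝ)
    (zhat : ℤ → (Fin d → ℤ) → ℝ) (qhat : ℕ → ℝ) : Finset (Pt d) :=
  (levelI d k L Δ o ε qhat).biUnion (fun i => Qlevel d k L Δ Q v o zhat i)

/-- `dist(q, Z) = min_{z ∈ Z} dist(q, z)`. -/
def nearDist (d : ℕ) (q : Pt d) (Z : Finset (Pt d)) : ℝ :=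
  sInf ((dist q) '' (Z : Set (Pt d)))

/-- `cost(P, Z) = Σ_{q ∈ P} dist(q, Z)²`. -/
def cost (d : ℕ) (P Z : Finset (Pt d)) : ℝ :=
  ∑ q ∈ P, nearDist d q Z ^ 2

/-- `OPT`, the optimal `k`-means cost of `Q`. -/
def OPTcost (d k : ℕ) (Q : Finset (Pt d)) : ℝ :=
  sInf {c : ℝ | ∃ Z : Finset (Pt d), Z.card = k ∧ c = cost d Q Z}

/-- Distance between two sets: `inf {dist x z : x ∈ C, z ∈ Z}`. -/
def setDist (d : ℕ) (C Z : Set (Pt d)) : ℝ := sInf (Set.image2 dist C Z)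

/-- A cell `C ∈ G_i` is a center cell w.r.t. `Z*` if `dist(C, Z*) ≤ g_i/(2d)`. -/
def IsCenterCell (d Δ : ℕ) (v : Pt d) (Zstar : Finset (Pt d)) (i : ℤ)
    (n : Fin d → ℤ) : Prop :=
  setDist d (cell d v (gside Δ i) n) (Zstar : Set (Pt d)) ≤ gside Δ i / (2 * (d : ℝ))

/-- The box `[0, Δ]^d` from which the random shift is drawn. -/
def shiftBox (d Δ : ℕ) : Set (Pt d) := {v | ∀ α : Fin d, v α ∈ Set.Icc (0 : ℝ) (Δ : ℝ)}
section Helpers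

lemma floor_eq_iff'' {g t : ℝ} (hg : 0 < g) {z : ℤ} :
    ⌊t / g⌋ = z ↔ (z : ℝ) * g ≤ t ∧ t < ((z : ℝ) + 1) * g := by
  rw [Int.floor_eq_iff, le_div_iff₀ hg, div_lt_iff₀ hg]

lemma mem_cell_iff {d : ℕ} {v : Pt d} {g : ℝ} (hg : 0 < g) {x : Pt d} {n : Fin d → ℤ} :
    x ∈ cell d v g n ↔ idx d v g x = n := by
  constructor
  · intro hx
    funext α
    have h := hx α
    exact (floor_eq_iff'' hg).2 ⟨by linarith [h.1], by linarith [h.2]⟩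
  · intro h α
    have h2 := (floor_eq_iff'' hg).1 (congrFun h α)
    exact ⟨by linarith [h2.1], by linarith [h2.2]⟩

lemma mem_cell_self {d : ℕ} (v : Pt d) {g : ℝ} (hg : 0 < g) (x : Pt d) :
    x ∈ cell d v g (idx d v g x) := (mem_cell_iff hg).2 rfl

lemma cell_subset_scale {d : ℕ} (v : Pt d) {g : ℝ} (hg : 0 < g) (n : ℕ) (hn : 0 < n)
    (q : Pt d) :
    cell d v g (idx d v g q) ⊆ cell d v ((n : ℝ) * g) (idx d v ((n : ℝ) * g) q) := by
  intro x hx α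
  have hng : (0:ℝ) < (n : ℝ) * g := by positivity
  set t := q α - v α with ht
  have hw : idx d v g q α = ⌊t / g⌋ := rfl
  have hz : idx d v ((n:ℝ) * g) q α = ⌊t / ((n:ℝ) * g)⌋ := rfl
  set w := ⌊t / g⌋ with hwdef
  set z := ⌊t / ((n:ℝ) * g)⌋ with hzdef
  have h1 : (z : ℝ) * ((n:ℝ) * g) ≤ t ∧ t < ((z:ℝ) + 1) * ((n:ℝ) * g) :=
    (floor_eq_iff'' hng).1 rfl
  have h2 : z * (n : ℤ) ≤ w := by
    rw [hwdef, Int.le_floor, le_div_iff₀ hg]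
    push_cast
    nlinarith [h1.1]
  have h3 : w < (z + 1) * (n : ℤ) := by
    rw [hwdef, Int.floor_lt, div_lt_iff₀ hg]
    push_cast
    nlinarith [h1.2]
  have hx' := hx α
  rw [hw] at hx'
  rw [hz]
  have h2' : (z : ℝ) * (n : ℝ) ≤ (w : ℝ) := by exact_mod_cast h2
  have h3' : (w : ℝ) + 1 ≤ ((z : ℝ) + 1) * (n : ℝ) := by
    have : (w : ℝ) < ((z + 1) * (n:ℤ) : ℤ) := by exact_mod_cast h3
    push_cast at this
    have hwint : (w : ℝ) + 1 ≤ ((z:ℝ) + 1) * (n:ℝ) := by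
      have h4 : w + 1 ≤ (z + 1) * (n : ℤ) := h3
      exact_mod_cast h4
    exact hwint
  constructor
  · nlinarith [hx'.1]
  · nlinarith [hx'.2]

lemma gside_pos {Δ : ℕ} (hΔ : 0 < Δ) (a : ℤ) : 0 < gside Δ a := by
  unfold gside
  positivity

lemma gside_scale {Δ : ℕ} {a b : ℤ} (hab : a ≤ b) :
    gside Δ a = ((2 ^ (b - a).toNat : ℕ) : ℝ) * gside Δ b := by
  unfold gside
  have h1 : ((2 ^ (b - a).toNat : ℕ) : ℝ) = (2:ℝ) ^ (b - a) := by
    push_cast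
    rw [← zpow_natCast (2:ℝ) (b-a).toNat, Int.toNat_of_nonneg (by omega)]
  rw [h1, zpow_sub₀ (two_ne_zero)]
  have h2 : (2:ℝ) ^ a ≠ 0 := zpow_ne_zero _ two_ne_zero
  have h3 : (2:ℝ) ^ b ≠ 0 := zpow_ne_zero _ two_ne_zero
  field_simp

lemma cell_level_subset {d Δ : ℕ} (hΔ : 0 < Δ) (v : Pt d) {a b : ℤ} (hab : a ≤ b)
    (q : Pt d) :
    cell d v (gside Δ b) (idx d v (gside Δ b) q) ⊆
      cell d v (gside Δ a) (idx d v (gside Δ a) q) := by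
  have h := gside_scale (Δ := Δ) hab
  rw [h]
  exact cell_subset_scale v (gside_pos hΔ b) _ (Nat.pow_pos (by norm_num)) q

end Helpers
section Helpers2

lemma Tthr_pos {d k Δ : ℕ} (hd : 1 ≤ d) (hk : 1 ≤ k) (hΔ : 0 < Δ) {o : ℝ} (ho : 0 < o)
    (a : ℤ) : 0 < Tthr d k Δ o a := by
  unfold Tthr
  have := gside_pos (Δ := Δ) hΔ a
  have hd' : (0:ℝ) < d := by exact_mod_cast hd
  have hk' : (0:ℝ) < k := by exact_mod_cast hk
  positivity

lemma Tthr_succ {d k Δ : ℕ} (hΔ : 0 < Δ) (o : ℝ) (a : ℤ) :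
    Tthr d k Δ o a = 4 * Tthr d k Δ o (a - 1) := by
  unfold Tthr gside
  have h2 : (2:ℝ) ^ (a - 1) = 2 ^ a / 2 := by
    rw [zpow_sub₀ two_ne_zero, zpow_one]
  rw [h2]
  have h3 : (2:ℝ) ^ a ≠ 0 := zpow_ne_zero _ two_ne_zero
  have h4 : (Δ:ℝ) ≠ 0 := by positivity
  field_simp
  ring

lemma Tthr_nat {d k Δ : ℕ} (hΔ : 0 < Δ) (o : ℝ) (j : ℕ) :
    Tthr d k Δ o (j : ℤ) = 4 ^ j * Tthr d k Δ o 0 := by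
  induction j with
  | zero => simp
  | succ n ih =>
      have : ((n+1 : ℕ) : ℤ) - 1 = (n : ℤ) := by push_cast; ring
      rw [Tthr_succ hΔ o ((n+1 : ℕ) : ℤ), this, ih]
      ring

lemma heavy_count {d k L Δ : ℕ} {Q : Finset (Pt d)} {v : Pt d} {o : ℝ}
    {zhat : ℤ → (Fin d → ℤ) → ℝ} (hz : ZhatAccurate d k L Δ Q v o zhat)
    (hd : 1 ≤ d) (hk : 1 ≤ k) (hΔ : 0 < Δ) (ho : 0 < o)
    {a : ℤ} (ha : 0 ≤ a) {n : Fin d → ℤ} (h : Heavy d k L Δ Q v o zhat a n) :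
    0.9 * Tthr d k Δ o a ≤ (cellCount d Q v (gside Δ a) n : ℝ) := by
  rcases h with ⟨h1, _⟩ | ⟨_, haL, hc, hT⟩
  · omega
  have hTpos := Tthr_pos hd hk hΔ ho a
  rcases hz a ha haL n hc with hadd | ⟨hml, hmr⟩
  · have := abs_le.1 hadd
    have h1 := this.1
    norm_num at h1 ⊢
    linarith
  · have hcn : (0:ℝ) ≤ (cellCount d Q v (gside Δ a) n : ℝ) := by positivity
    nlinarith

lemma exists_crucial_level {d k L Δ : ℕ} (hL : 1 ≤ L)
    {Q : Finset (Pt d)} {v : Pt d} {o : ℝ} {zhat : ℤ → (Fin d → ℤ) → ℝ}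
    (hΔ : 0 < Δ) (q : Pt d) (hq : q ∈ Q)
    (hroot : Heavy d k L Δ Q v o zhat (-1) (idx d v (gside Δ (-1)) q)) :
    ∃ j : ℕ, j ≤ L ∧ q ∈ Qlevel d k L Δ Q v o zhat (j : ℤ) := by
  have hPL : ¬ Heavy d k L Δ Q v o zhat (L : ℤ) (idx d v (gside Δ (L : ℤ)) q) := by
    rintro (⟨h1, _⟩ | ⟨_, h2, _⟩) <;> omega
  have hex : ∃ j : ℕ, ¬ Heavy d k L Δ Q v o zhat (j : ℤ) (idx d v (gside Δ (j : ℤ)) q) :=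
    ⟨L, hPL⟩
  classical
  set j := Nat.find hex with hj
  have hjL : j ≤ L := Nat.find_le hPL
  refine ⟨j, hjL, ?_⟩
  have hjspec := Nat.find_spec hex
  rw [Qlevel, Finset.mem_filter]
  refine ⟨hq, ?_⟩
  refine ⟨by positivity, ?_, hjspec, ?_⟩
  · exact_mod_cast hjL
  · intro jz h1 h2 m hsub
    have hmem : q ∈ cell d v (gside Δ jz) m :=
      hsub (mem_cell_self v (gside_pos hΔ _) q)
    have hm : m = idx d v (gside Δ jz) q := ((mem_cell_iff (gside_pos hΔ _)).1 hmem).symm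
    subst hm
    rcases (by omega : jz = -1 ∨ 0 ≤ jz) with rfl | hjz
    · exact hroot
    · have hlt : jz.toNat < j := by omega
      have := Nat.find_min hex hlt
      rw [not_not] at this
      have hcast : ((jz.toNat : ℕ) : ℤ) = jz := Int.toNat_of_nonneg hjz
      rwa [hcast] at this

end Helpers2

set_option maxHeartbeats 1000000 in
/-- for every `i ∈ {1,…,L}` and every `p ∈ Q_i`, the parent cell
`C = c_{i−1}(p)` satisfies `|C ∩ Q^I| ≥ T_{i−1}(o)/2`. -/
theorem parent_cell_important_points
    (d k L Δ : ℕ) (hd : 1 ≤ d) (hk : 1 ≤ k) (hL : 1 ≤ L) (hΔ : Δ = 2 ^ L)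
    (v : Pt d) (Q : Finset (Pt d))
    (hQ : ∀ p ∈ Q, ∀ α : Fin d, ∃ m : ℤ, 1 ≤ m ∧ m ≤ (Δ : ℤ) ∧ p α = (m : ℝ))
    (o : ℝ) (ho : 0 < o)
    (zhat : ℤ → (Fin d → ℤ) → ℝ)
    (hz : ZhatAccurate d k L Δ Q v o zhat)
    (ε : ℝ) (hε0 : 0 < ε) (hε1 : ε < 1 / 2)
    (qhat : ℕ → ℝ)
    (hq : QhatAccurate d k L Δ Q v o ε zhat qhat) :
    ∀ i : ℕ, 1 ≤ i → i ≤ L → ∀ p ∈ Qlevel d k L Δ Q v o zhat i,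
      Tthr d k Δ o ((i : ℤ) - 1) / 2 ≤
        (cellCount d (QI d k L Δ Q v o ε zhat qhat) v (gside Δ ((i : ℤ) - 1))
            (idx d v (gside Δ ((i : ℤ) - 1)) p) : ℝ) := by
  intro i hi1 hiL p hp
  classical
  have hΔ0 : 0 < Δ := by rw [hΔ]; positivity
  have hτpos : ∀ a : ℤ, 0 < Tthr d k Δ o a := fun a => Tthr_pos hd hk hΔ0 ho a
  have hLd : (1:ℝ) ≤ L := by exact_mod_cast hL
  have hdd : (1:ℝ) ≤ d := by exact_mod_cast hd
  have hγpos : 0 < gammaPar d L ε := by unfold gammaPar; positivity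
  have hγle : gammaPar d L ε ≤ 1 / 3200 := by
    unfold gammaPar
    rw [div_le_iff₀ (by positivity)]
    have hd2 : (1:ℝ) ≤ (d:ℝ)^2 := by nlinarith [hdd]
    have hd3 : (1:ℝ) ≤ (d:ℝ)^3 := by nlinarith [hdd, hd2]
    have h1 : (1:ℝ) ≤ (L:ℝ) * (d:ℝ)^3 := by nlinarith [hLd, hd3]
    linarith
  obtain ⟨hpQ, hcr⟩ := Finset.mem_filter.1 hp
  obtain ⟨-, hiLe, hnotH, hanc⟩ := hcr
  set m := idx d v (gside Δ ((i:ℤ) - 1)) p with hm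
  set C := cell d v (gside Δ ((i:ℤ) - 1)) m with hCdef
  have hsubparent : cell d v (gside Δ (i:ℤ)) (idx d v (gside Δ (i:ℤ)) p) ⊆ C :=
    cell_level_subset hΔ0 v (by omega) p
  have hHC : Heavy d k L Δ Q v o zhat ((i:ℤ)-1) m :=
    hanc ((i:ℤ)-1) (by omega) (by omega) m hsubparent
  have hN : 0.9 * Tthr d k Δ o ((i:ℤ)-1) ≤ (cellCount d Q v (gside Δ ((i:ℤ)-1)) m : ℝ) :=
    heavy_count hz hd hk hΔ0 ho (by omega) hHC
  set N := cellCount d Q v (gside Δ ((i:ℤ)-1)) m with hNdef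
  have hrootp : Heavy d k L Δ Q v o zhat (-1) (idx d v (gside Δ (-1)) p) :=
    hanc (-1) le_rfl (by omega) _ (cell_level_subset hΔ0 v (by omega) p)
  have hidxq : ∀ q : Pt d, q ∈ C → ∀ a : ℤ, a ≤ (i:ℤ) - 1 →
      idx d v (gside Δ a) q = idx d v (gside Δ a) p := by
    intro q hqC a ha
    have h1 : q ∈ cell d v (gside Δ a) (idx d v (gside Δ a) p) :=
      cell_level_subset hΔ0 v ha p hqC
    exact (mem_cell_iff (gside_pos hΔ0 _)).1 h1
  have hrootq : ∀ q : Pt d, q ∈ C →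
      Heavy d k L Δ Q v o zhat (-1) (idx d v (gside Δ (-1)) q) := by
    intro q hqC
    rw [hidxq q hqC (-1) (by omega)]
    exact hrootp
  set CQ := Q.filter (fun q => q ∈ C) with hCQ
  have hCQcard : CQ.card = N := rfl
  set QIf := QI d k L Δ Q v o ε zhat qhat with hQIf
  set CI := QIf.filter (fun q => q ∈ C) with hCI
  set Bad := (Finset.range (L+1)).filter
    (fun j => j ∉ levelI d k L Δ o ε qhat ∧
      ∃ x, x ∈ CQ ∧ x ∈ Qlevel d k L Δ Q v o zhat (j:ℤ)) with hBad
  have hcover : CQ ⊆ CI ∪ Bad.biUnion (fun j => Qlevel d k L Δ Q v o zhat (j:ℤ)) := by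
    intro q hqCQ
    obtain ⟨hqQ, hqC⟩ := Finset.mem_filter.1 hqCQ
    obtain ⟨j, hjL, hqj⟩ := exists_crucial_level hL hΔ0 q hqQ (hrootq q hqC)
    by_cases hjI : j ∈ levelI d k L Δ o ε qhat
    · refine Finset.mem_union.2 (Or.inl ?_)
      exact Finset.mem_filter.2 ⟨Finset.mem_biUnion.2 ⟨j, hjI, hqj⟩, hqC⟩
    · refine Finset.mem_union.2 (Or.inr ?_)
      exact Finset.mem_biUnion.2 ⟨j, Finset.mem_filter.2 ⟨Finset.mem_range.2 (by omega),
        hjI, ⟨q, hqCQ, hqj⟩⟩, hqj⟩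
  have hcard : (N:ℝ) ≤ (CI.card : ℝ) +
      ∑ j ∈ Bad, ((Qlevel d k L Δ Q v o zhat (j:ℤ)).card : ℝ) := by
    have h1 := Finset.card_le_card hcover
    have h2 := Finset.card_union_le CI (Bad.biUnion (fun j => Qlevel d k L Δ Q v o zhat (j:ℤ)))
    have h3 := Finset.card_biUnion_le (s := Bad) (t := fun j => Qlevel d k L Δ Q v o zhat (j:ℤ))
    rw [hCQcard] at h1
    have h4 : N ≤ CI.card + ∑ j ∈ Bad, (Qlevel d k L Δ Q v o zhat (j:ℤ)).card := by omega
    exact_mod_cast h4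
  have hbound1 : ∀ j ∈ Bad, ((Qlevel d k L Δ Q v o zhat (j:ℤ)).card : ℝ) ≤
      2 * gammaPar d L ε * Tthr d k Δ o (j:ℤ) := by
    intro j hj
    obtain ⟨hjr, hjI, -⟩ := Finset.mem_filter.1 hj
    have hjL : j ≤ L := by have := Finset.mem_range.1 hjr; omega
    obtain ⟨hq0, hqacc⟩ := hq j hjL
    have hqlt : qhat j < gammaPar d L ε * Tthr d k Δ o (j:ℤ) := by
      by_contra hcon
      push_neg at hcon
      exact hjI (Finset.mem_filter.2 ⟨hjr, hcon⟩)
    have hτj := hτpos (j:ℤ)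
    have hc0 : (0:ℝ) ≤ ((Qlevel d k L Δ Q v o zhat (j:ℤ)).card : ℝ) := Nat.cast_nonneg _
    rcases hqacc with hadd | ⟨hml, hmr⟩
    · have habs := abs_le.1 hadd
      nlinarith [habs.1, mul_pos hγpos hτj]
    · nlinarith [mul_pos hγpos hτj]
  have hbound2 : ∀ j ∈ Bad, Tthr d k Δ o (j:ℤ) ≤ (40/9) * (N:ℝ) := by
    intro j hj
    obtain ⟨hjr, hjI, q, hqCQ, hqj⟩ := Finset.mem_filter.1 hj
    have hjL : j ≤ L := by have := Finset.mem_range.1 hjr; omega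
    obtain ⟨hqQ, hqC⟩ := Finset.mem_filter.1 hqCQ
    obtain ⟨-, -, hqnotH, hqanc⟩ := (Finset.mem_filter.1 hqj).2
    have hij : i ≤ j := by
      by_contra hcon
      push_neg at hcon
      have hle : (j:ℤ) ≤ (i:ℤ) - 1 := by omega
      have hidx := hidxq q hqC (j:ℤ) hle
      have hH : Heavy d k L Δ Q v o zhat (j:ℤ) (idx d v (gside Δ (j:ℤ)) p) :=
        hanc (j:ℤ) (by omega) (by omega) _
          (cell_level_subset hΔ0 v (by omega) p)
      rw [← hidx] at hH
      exact hqnotH hH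
    have hj1 : 1 ≤ j := le_trans hi1 hij
    have hparent : Heavy d k L Δ Q v o zhat ((j:ℤ)-1) (idx d v (gside Δ ((j:ℤ)-1)) q) :=
      hqanc ((j:ℤ)-1) (by omega) (by omega) _
        (cell_level_subset hΔ0 v (by omega) q)
    have hpc : 0.9 * Tthr d k Δ o ((j:ℤ)-1) ≤
        (cellCount d Q v (gside Δ ((j:ℤ)-1)) (idx d v (gside Δ ((j:ℤ)-1)) q) : ℝ) :=
      heavy_count hz hd hk hΔ0 ho (by omega) hparent
    have hsub2 : cell d v (gside Δ ((j:ℤ)-1)) (idx d v (gside Δ ((j:ℤ)-1)) q) ⊆ C := by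
      have h1 : cell d v (gside Δ ((j:ℤ)-1)) (idx d v (gside Δ ((j:ℤ)-1)) q) ⊆
          cell d v (gside Δ ((i:ℤ)-1)) (idx d v (gside Δ ((i:ℤ)-1)) q) :=
        cell_level_subset hΔ0 v (by omega) q
      rwa [hidxq q hqC ((i:ℤ)-1) le_rfl] at h1
    have hcnt : cellCount d Q v (gside Δ ((j:ℤ)-1)) (idx d v (gside Δ ((j:ℤ)-1)) q) ≤ N := by
      apply Finset.card_le_card
      intro x hx
      obtain ⟨hxQ, hxc⟩ := Finset.mem_filter.1 hx
      exact Finset.mem_filter.2 ⟨hxQ, hsub2 hxc⟩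
    have h4 : Tthr d k Δ o (j:ℤ) = 4 * Tthr d k Δ o ((j:ℤ)-1) := Tthr_succ hΔ0 o _
    have h5 : (cellCount d Q v (gside Δ ((j:ℤ)-1)) (idx d v (gside Δ ((j:ℤ)-1)) q) : ℝ)
        ≤ (N:ℝ) := by exact_mod_cast hcnt
    linarith
  have hsum : ∑ j ∈ Bad, Tthr d k Δ o (j:ℤ) ≤ (160/27) * (N:ℝ) := by
    rcases Finset.eq_empty_or_nonempty Bad with hBe | hne
    · rw [hBe]
      simp
    · set J := Bad.max' hne with hJ
      have hJB : J ∈ Bad := Finset.max'_mem _ _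
      have hJb := hbound2 J hJB
      have hsub : Bad ⊆ Finset.range (J+1) := by
        intro j hj
        exact Finset.mem_range.2 (by have := Finset.le_max' Bad j hj; omega)
      have h1 : ∑ j ∈ Bad, Tthr d k Δ o (j:ℤ) ≤
          ∑ j ∈ Finset.range (J+1), Tthr d k Δ o (j:ℤ) :=
        Finset.sum_le_sum_of_subset_of_nonneg hsub (fun j _ _ => (hτpos _).le)
      have h2 : ∑ j ∈ Finset.range (J+1), Tthr d k Δ o (j:ℤ)
          = ((4:ℝ)^(J+1) - 1)/3 * Tthr d k Δ o 0 := by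
        rw [Finset.sum_congr rfl (fun j _ => Tthr_nat hΔ0 o j), ← Finset.sum_mul,
          geom_sum_eq (by norm_num)]
        norm_num
      have h3 : Tthr d k Δ o (J:ℤ) = 4^J * Tthr d k Δ o 0 := Tthr_nat hΔ0 o J
      have hτ0 := Tthr_pos hd hk hΔ0 ho 0
      rw [pow_succ] at h2
      linarith [h1, h2, h3, hJb, hτ0]
  have hsum2 : ∑ j ∈ Bad, ((Qlevel d k L Δ Q v o zhat (j:ℤ)).card : ℝ)
      ≤ 2 * gammaPar d L ε * ∑ j ∈ Bad, Tthr d k Δ o (j:ℤ) := by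
    rw [Finset.mul_sum]
    exact Finset.sum_le_sum (fun j hj => hbound1 j hj)
  have hNnn : (0:ℝ) ≤ (N:ℝ) := Nat.cast_nonneg N
  have hτi := hτpos ((i:ℤ)-1)
  have hSnn : 0 ≤ ∑ j ∈ Bad, Tthr d k Δ o (j:ℤ) :=
    Finset.sum_nonneg (fun j _ => (hτpos _).le)
  have hgoal : cellCount d QIf v (gside Δ ((i:ℤ)-1)) m = CI.card := rfl
  rw [hgoal]
  have hA : 2 * gammaPar d L ε * ∑ j ∈ Bad, Tthr d k Δ o (j:ℤ) ≤
      2 * gammaPar d L ε * ((160/27) * (N:ℝ)) :=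
    mul_le_mul_of_nonneg_left hsum (show (0:ℝ) ≤ 2 * gammaPar d L ε by positivity)
  have hB : gammaPar d L ε * (N:ℝ) ≤ (1/3200) * (N:ℝ) :=
    mul_le_mul_of_nonneg_right hγle hNnn
  nlinarith [hcard, hsum2, hA, hB, hN, hτi]

end
end

section
/- For every i ∈ {0,…,L} and every fixed z ∈ ℝ^d, the expected number of cells C ∈ G_i with dist(C,z) ≤ g_i/(2d), over the uniformly random shift v ∈ [0,Δ]^d, is at most (1 + 1/d)^d, and hence at most e; here dist(C,z) = inf{dist(x,z) : x ∈ C}. -/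
open scoped BigOperators Classical
open MeasureTheory

noncomputable section

namespace Stmt9Aux

lemma Ico_subset_biUnion (a g : ℝ) (N : ℕ) :
    Set.Ico a (a + N * g) ⊆ ⋃ j ∈ Finset.range N, Set.Ico (a + j * g) (a + (j + 1) * g) := by
  induction N with
  | zero => simp
  | succ N ih =>
    intro x hx
    rcases lt_or_ge x (a + N * g) with h | h
    · obtain ⟨j, hj, hx'⟩ := Set.mem_iUnion₂.1 (ih ⟨hx.1, h⟩)
      exact Set.mem_iUnion₂.2 ⟨j, Finset.mem_range.2 (Nat.lt_succ_of_lt (Finset.mem_range.1 hj)), hx'⟩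
    · refine Set.mem_iUnion₂.2 ⟨N, Finset.self_mem_range_succ N, ⟨h, ?_⟩⟩
      have := hx.2
      push_cast at this ⊢
      linarith

lemma sum_pieces_le (S : Set ℝ) (hS : MeasurableSet S) (g : ℝ) (hg : 0 < g) (P : Finset ℤ) :
    ∑ p ∈ P, volume (S ∩ Set.Ico ((p : ℝ) * g) (((p : ℝ) + 1) * g)) ≤ volume S := by
  have hd : (↑P : Set ℤ).PairwiseDisjoint
      (fun p : ℤ => S ∩ Set.Ico ((p : ℝ) * g) (((p : ℝ) + 1) * g)) := by
    intro p _ q _ hpq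
    refine Disjoint.mono Set.inter_subset_right Set.inter_subset_right ?_
    rw [Set.Ico_disjoint_Ico]
    rcases lt_or_gt_of_ne hpq with h | h
    · have : ((p : ℝ) + 1) * g ≤ (q : ℝ) * g := by
        apply mul_le_mul_of_nonneg_right _ hg.le
        exact_mod_cast Int.add_one_le_iff.2 h
      calc min (((p:ℝ)+1)*g) (((q:ℝ)+1)*g) ≤ ((p:ℝ)+1)*g := min_le_left _ _
        _ ≤ (q:ℝ)*g := this
        _ ≤ max ((p:ℝ)*g) ((q:ℝ)*g) := le_max_right _ _
    · have : ((q : ℝ) + 1) * g ≤ (p : ℝ) * g := by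
        apply mul_le_mul_of_nonneg_right _ hg.le
        exact_mod_cast Int.add_one_le_iff.2 h
      calc min (((p:ℝ)+1)*g) (((q:ℝ)+1)*g) ≤ ((q:ℝ)+1)*g := min_le_right _ _
        _ ≤ (p:ℝ)*g := this
        _ ≤ max ((p:ℝ)*g) ((q:ℝ)*g) := le_max_left _ _
  rw [← measure_biUnion_finset hd (fun p _ => hS.inter measurableSet_Ico)]
  exact measure_mono (Set.iUnion₂_subset fun p _ => Set.inter_subset_left)

lemma sum_vol_le (g ℓ : ℝ) (hg : 0 < g) (hℓ : 0 ≤ ℓ) (N : ℕ) (K : ℝ) (M : Finset ℤ) :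
    ∑ m ∈ M, (volume (Set.Ico (K - (m : ℝ) * g) (K - (m : ℝ) * g + ℓ)
        ∩ Set.Ico (0 : ℝ) ((N : ℝ) * g))).toReal ≤ (N : ℝ) * ℓ := by
  set S : Set ℝ := Set.Ico K (K + ℓ) with hSdef
  set u : ℤ → ENNReal := fun p => volume (S ∩ Set.Ico ((p : ℝ) * g) (((p : ℝ) + 1) * g))
    with hudef
  have hterm : ∀ m : ℤ, volume (Set.Ico (K - (m:ℝ) * g) (K - (m:ℝ) * g + ℓ)
      ∩ Set.Ico (0:ℝ) ((N:ℝ) * g))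
      = volume (S ∩ Set.Ico ((m:ℝ) * g) ((m:ℝ) * g + (N:ℝ) * g)) := by
    intro m
    rw [hSdef, Set.Ico_inter_Ico, Set.Ico_inter_Ico, Real.volume_Ico, Real.volume_Ico]
    congr 1
    simp only [min_def, max_def]
    split_ifs <;> linarith
  have hcov : ∀ m : ℤ, volume (S ∩ Set.Ico ((m:ℝ) * g) ((m:ℝ) * g + (N:ℝ) * g))
      ≤ ∑ j ∈ Finset.range N, u (m + (j : ℤ)) := by
    intro m
    have hsub : S ∩ Set.Ico ((m:ℝ) * g) ((m:ℝ) * g + (N:ℝ) * g)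
        ⊆ ⋃ j ∈ Finset.range N,
            (S ∩ Set.Ico (((m + (j:ℤ) : ℤ) : ℝ) * g) ((((m + (j:ℤ) : ℤ) : ℝ) + 1) * g)) := by
      intro x hx
      obtain ⟨j, hj, hx'⟩ := Set.mem_iUnion₂.1 (Ico_subset_biUnion ((m:ℝ)*g) g N hx.2)
      refine Set.mem_iUnion₂.2 ⟨j, hj, hx.1, ?_⟩
      convert hx' using 2 <;> push_cast <;> ring
    exact le_trans (measure_mono hsub) (measure_biUnion_finset_le _ _)
  have hsum2 : ∀ j : ℕ, ∑ m ∈ M, u (m + (j:ℤ)) ≤ ENNReal.ofReal ℓ := by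
    intro j
    have hinj : ∀ x ∈ M, ∀ y ∈ M, x + (j:ℤ) = y + (j:ℤ) → x = y := by omega
    have himg : ∑ p ∈ M.image (fun m : ℤ => m + (j:ℤ)), u p = ∑ m ∈ M, u (m + (j:ℤ)) :=
      Finset.sum_image hinj
    rw [← himg]
    have := sum_pieces_le S measurableSet_Ico g hg (M.image (fun m => m + (j:ℤ)))
    refine le_trans this (le_of_eq ?_)
    rw [hSdef, Real.volume_Ico]
    ring_nf
  have hmain : ∑ m ∈ M, volume (Set.Ico (K - (m:ℝ) * g) (K - (m:ℝ) * g + ℓ)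
      ∩ Set.Ico (0:ℝ) ((N:ℝ) * g)) ≤ (N : ENNReal) * ENNReal.ofReal ℓ := by
    calc ∑ m ∈ M, volume (Set.Ico (K - (m:ℝ) * g) (K - (m:ℝ) * g + ℓ)
          ∩ Set.Ico (0:ℝ) ((N:ℝ) * g))
        ≤ ∑ m ∈ M, ∑ j ∈ Finset.range N, u (m + (j:ℤ)) := by
          refine Finset.sum_le_sum fun m _ => ?_
          rw [hterm m]; exact hcov m
      _ = ∑ j ∈ Finset.range N, ∑ m ∈ M, u (m + (j:ℤ)) := Finset.sum_comm
      _ ≤ ∑ _j ∈ Finset.range N, ENNReal.ofReal ℓ := Finset.sum_le_sum fun j _ => hsum2 j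
      _ = (N : ENNReal) * ENNReal.ofReal ℓ := by
          rw [Finset.sum_const, Finset.card_range, nsmul_eq_mul]
  have hfin : ∀ m ∈ M, volume (Set.Ico (K - (m:ℝ) * g) (K - (m:ℝ) * g + ℓ)
      ∩ Set.Ico (0:ℝ) ((N:ℝ) * g)) ≠ ⊤ := by
    intro m _
    refine ne_top_of_le_ne_top ?_ (measure_mono Set.inter_subset_left)
    rw [Real.volume_Ico]
    exact ENNReal.ofReal_ne_top
  rw [← ENNReal.toReal_sum hfin]
  have hne : (N : ENNReal) * ENNReal.ofReal ℓ ≠ ⊤ :=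
    ENNReal.mul_ne_top (ENNReal.natCast_ne_top N) ENNReal.ofReal_ne_top
  calc (∑ m ∈ M, volume _).toReal ≤ ((N : ENNReal) * ENNReal.ofReal ℓ).toReal :=
        ENNReal.toReal_mono hne hmain
    _ = (N : ℝ) * ℓ := by
        rw [ENNReal.toReal_mul, ENNReal.toReal_natCast, ENNReal.toReal_ofReal hℓ]

noncomputable def cnt (g r zc c : ℝ) : Finset ℤ :=
  Finset.Icc ⌈(zc - c - g - r) / g⌉ ⌊(zc - c + r) / g⌋

lemma mem_cnt {g r zc c : ℝ} (hg : 0 < g) {m : ℤ} :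
    m ∈ cnt g r zc c ↔ zc - c - g - r ≤ (m : ℝ) * g ∧ (m : ℝ) * g ≤ zc - c + r := by
  rw [cnt, Finset.mem_Icc, Int.ceil_le, Int.le_floor, div_le_iff₀ hg, le_div_iff₀ hg]

lemma cnt_card_le {g r zc c : ℝ} (hg : 0 < g) (hrg : 2 * r ≤ g) :
    (cnt g r zc c).card ≤ 3 := by
  rw [cnt, Int.card_Icc]
  have h1 : ((⌊(zc - c + r) / g⌋ : ℝ)) ≤ (zc - c + r) / g := Int.floor_le _
  have h2 : (zc - c - g - r) / g ≤ ((⌈(zc - c - g - r) / g⌉ : ℝ)) := Int.le_ceil _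
  have h3 : (zc - c + r) / g - (zc - c - g - r) / g ≤ 2 := by
    rw [div_sub_div_same, div_le_iff₀ hg]; linarith
  have key : (⌊(zc - c + r) / g⌋ + 1 - ⌈(zc - c - g - r) / g⌉ : ℤ) ≤ 3 := by
    have : ((⌊(zc - c + r) / g⌋ + 1 - ⌈(zc - c - g - r) / g⌉ : ℤ) : ℝ) ≤ 3 := by
      push_cast; linarith
    exact_mod_cast this
  exact Int.toNat_le.2 (by exact_mod_cast key)

lemma cnt_measurable (g r zc : ℝ) : Measurable (fun c : ℝ => ((cnt g r zc c).card : ℝ)) := by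
  simp only [cnt, Int.card_Icc]
  have h1 : Measurable fun c : ℝ => (⌊(zc - c + r) / g⌋ + 1 - ⌈(zc - c - g - r) / g⌉ : ℤ) := by
    refine Measurable.sub (Measurable.add ?_ measurable_const) ?_
    · exact Int.measurable_floor.comp (by fun_prop)
    · exact Int.measurable_ceil.comp (by fun_prop)
  exact (measurable_from_top (f := fun n : ℤ => ((n.toNat : ℕ) : ℝ))).comp h1

lemma oneDim (g r zc : ℝ) (hg : 0 < g) (hr : 0 ≤ r) (N : ℕ) :
    (∫ c in Set.Icc (0:ℝ) ((N : ℝ) * g), ((cnt g r zc c).card : ℝ))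
      ≤ (N : ℝ) * (g + 2 * r) := by
  set M : Finset ℤ := Finset.Icc ⌈(zc - (N:ℝ)*g - g - r)/g⌉ ⌊(zc + r)/g⌋ with hMdef
  have hMsub : ∀ c ∈ Set.Icc (0:ℝ) ((N:ℝ)*g), cnt g r zc c ⊆ M := by
    intro c hc m hm
    rw [mem_cnt hg] at hm
    rw [hMdef, Finset.mem_Icc]
    constructor
    · exact Int.ceil_le.2 (by rw [div_le_iff₀ hg]; have := hm.1; have := hc.2; linarith)
    · exact Int.le_floor.2 (by rw [le_div_iff₀ hg]; have := hm.2; have := hc.1; linarith)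
  have hEq : Set.EqOn (fun c => ((cnt g r zc c).card : ℝ))
      (fun c => ∑ m ∈ M, Set.indicator (Set.Icc (zc - (m:ℝ)*g - g - r) (zc - (m:ℝ)*g + r))
        (fun _ => (1:ℝ)) c) (Set.Icc (0:ℝ) ((N:ℝ)*g)) := by
    intro c hc
    simp only [Set.indicator_apply]
    rw [Finset.sum_boole]
    have hset : cnt g r zc c
        = M.filter (fun m : ℤ => c ∈ Set.Icc (zc - (m:ℝ)*g - g - r) (zc - (m:ℝ)*g + r)) := by
      apply Finset.ext
      intro m
      rw [Finset.mem_filter, mem_cnt hg, Set.mem_Icc]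
      constructor
      · rintro ⟨h1, h2⟩
        exact ⟨hMsub c hc ((mem_cnt hg).2 ⟨h1, h2⟩), by linarith, by linarith⟩
      · rintro ⟨_, h1, h2⟩
        exact ⟨by linarith, by linarith⟩
    rw [hset]
  rw [setIntegral_congr_fun measurableSet_Icc hEq]
  have hib : ∀ m : ℤ, IntegrableOn
      (fun c => Set.indicator (Set.Icc (zc - (m:ℝ)*g - g - r) (zc - (m:ℝ)*g + r))
        (fun _ => (1:ℝ)) c) (Set.Icc (0:ℝ) ((N:ℝ)*g)) volume := by
    intro m
    refine Integrable.indicator ?_ measurableSet_Icc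
    exact integrableOn_const (by rw [Real.volume_Icc]; exact ENNReal.ofReal_ne_top)
  rw [integral_finset_sum M (fun m _ => hib m)]
  have hint : ∀ m : ℤ, (∫ c in Set.Icc (0:ℝ) ((N:ℝ)*g),
      Set.indicator (Set.Icc (zc - (m:ℝ)*g - g - r) (zc - (m:ℝ)*g + r)) (fun _ => (1:ℝ)) c)
      = (volume (Set.Ico ((zc - g - r) - (m:ℝ)*g) ((zc - g - r) - (m:ℝ)*g + (g + 2*r))
          ∩ Set.Ico (0:ℝ) ((N:ℝ)*g))).toReal := by
    intro m
    rw [setIntegral_indicator measurableSet_Icc, setIntegral_const, smul_eq_mul, mul_one,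
      Set.inter_comm]
    rw [show zc - (m:ℝ)*g - g - r = (zc - g - r) - (m:ℝ)*g from by ring,
      show zc - (m:ℝ)*g + r = ((zc - g - r) - (m:ℝ)*g) + (g + 2*r) from by ring,
      Set.Icc_inter_Icc, Set.Ico_inter_Ico, measureReal_def, Real.volume_Icc, Real.volume_Ico]
  calc ∑ m ∈ M, (∫ c in Set.Icc (0:ℝ) ((N:ℝ)*g),
        Set.indicator (Set.Icc (zc - (m:ℝ)*g - g - r) (zc - (m:ℝ)*g + r)) (fun _ => (1:ℝ)) c)
      = ∑ m ∈ M, (volume (Set.Ico ((zc - g - r) - (m:ℝ)*g) ((zc - g - r) - (m:ℝ)*g + (g + 2*r))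
          ∩ Set.Ico (0:ℝ) ((N:ℝ)*g))).toReal := Finset.sum_congr rfl fun m _ => hint m
    _ ≤ (N : ℝ) * (g + 2*r) := sum_vol_le g (g + 2*r) hg (by linarith) N (zc - g - r) M

lemma abs_coord_le_dist {d : ℕ} (x y : Pt d) (α : Fin d) : |x α - y α| ≤ dist x y := by
  rw [EuclideanSpace.dist_eq]
  rw [show |x α - y α| = Real.sqrt ((x α - y α) ^ 2) from (Real.sqrt_sq_eq_abs _).symm]
  apply Real.sqrt_le_sqrt
  have : (x α - y α) ^ 2 = dist (x α) (y α) ^ 2 := by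
    rw [Real.dist_eq, sq_abs]
  rw [this]
  exact Finset.single_le_sum (f := fun i => dist (x i) (y i) ^ 2)
    (fun β _ => sq_nonneg _) (Finset.mem_univ α)

lemma pointwise_bound {d : ℕ} (g r : ℝ) (hg : 0 < g) (hr : r = g / (2 * (d:ℝ)))
    (hr0 : 0 ≤ r) (z v : Pt d) :
    (({n : Fin d → ℤ | setDist d (cell d v g n) {z} ≤ g / (2 * (d:ℝ))}.ncard : ℝ))
      ≤ ∏ α : Fin d, ((cnt g r (z α) (v α)).card : ℝ) := by
  have hsub : {n : Fin d → ℤ | setDist d (cell d v g n) {z} ≤ g / (2 * (d:ℝ))}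
      ⊆ ↑(Fintype.piFinset (fun α => cnt g r (z α) (v α))) := by
    intro n hn
    simp only [Set.mem_setOf_eq] at hn
    rw [← hr] at hn
    rw [Finset.mem_coe, Fintype.mem_piFinset]
    intro α
    rw [mem_cnt hg]
    have hcellmem : WithLp.toLp 2 (fun β => v β + (n β : ℝ) * g) ∈ cell d v g n := by
      intro β
      refine ⟨le_refl _, ?_⟩
      show v β + (n β : ℝ) * g < v β + ((n β : ℝ) + 1) * g
      have : (n β : ℝ) * g < ((n β : ℝ) + 1) * g :=
        mul_lt_mul_of_pos_right (lt_add_one _) hg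
      linarith
    have hne : (Set.image2 dist (cell d v g n) ({z} : Set (Pt d))).Nonempty :=
      ⟨_, Set.mem_image2_of_mem hcellmem rfl⟩
    constructor
    · by_contra hcon
      push_neg at hcon
      have hlow : ∀ y ∈ Set.image2 dist (cell d v g n) ({z} : Set (Pt d)),
          z α - (v α + ((n α : ℝ) + 1) * g) ≤ y := by
        rintro y ⟨x, hx, w, hw, rfl⟩
        rcases Set.mem_singleton_iff.1 hw with rfl
        have h1 : |x α - w α| ≤ dist x w := abs_coord_le_dist x w α
        have h2 : x α < v α + ((n α : ℝ) + 1) * g := (hx α).2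
        have h3 : w α - x α ≤ |x α - w α| := by
          rw [abs_sub_comm]; exact le_abs_self _
        linarith
      have hInf := le_csInf hne hlow
      rw [setDist] at hn
      have : r < z α - (v α + ((n α : ℝ) + 1) * g) := by nlinarith
      linarith
    · by_contra hcon
      push_neg at hcon
      have hlow : ∀ y ∈ Set.image2 dist (cell d v g n) ({z} : Set (Pt d)),
          (v α + (n α : ℝ) * g) - z α ≤ y := by
        rintro y ⟨x, hx, w, hw, rfl⟩
        rcases Set.mem_singleton_iff.1 hw with rfl
        have h1 : |x α - w α| ≤ dist x w := abs_coord_le_dist x w α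
        have h2 : v α + (n α : ℝ) * g ≤ x α := (hx α).1
        have h3 : x α - w α ≤ |x α - w α| := le_abs_self _
        linarith
      have hInf := le_csInf hne hlow
      rw [setDist] at hn
      have : r < (v α + (n α : ℝ) * g) - z α := by nlinarith
      linarith
  have hfin : (↑(Fintype.piFinset (fun α => cnt g r (z α) (v α))) : Set (Fin d → ℤ)).Finite :=
    (Fintype.piFinset (fun α => cnt g r (z α) (v α))).finite_toSet
  have hle := Set.ncard_le_ncard hsub hfin
  rw [Set.ncard_coe_finset, Fintype.card_piFinset] at hle
  calc (({n : Fin d → ℤ | setDist d (cell d v g n) {z} ≤ g / (2 * (d:ℝ))}.ncard : ℝ))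
      ≤ ((∏ α : Fin d, (cnt g r (z α) (v α)).card : ℕ) : ℝ) := Nat.cast_le.2 hle
    _ = ∏ α : Fin d, ((cnt g r (z α) (v α)).card : ℝ) := by push_cast; rfl

end Stmt9Aux

open Stmt9Aux

/-- for every `i ∈ {0,…,L}` and every fixed `z ∈ ℝ^d`, the expected
number of cells `C ∈ G_i` with `dist(C,z) ≤ g_i/(2d)`, over the uniformly random
shift `v ∈ [0,Δ]^d`, is at most `(1 + 1/d)^d`, and hence at most `e`. -/

theorem expected_near_cells_le
    (d k L Δ : ℕ) (hd : 1 ≤ d) (hk : 1 ≤ k) (hL : 1 ≤ L) (hΔ : Δ = 2 ^ L)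
    (i : ℕ) (hi : i ≤ L) (z : Pt d) :
    (∫ v in shiftBox d Δ,
        ({n : Fin d → ℤ |
            setDist d (cell d v (gside Δ i) n) {z} ≤
              gside Δ i / (2 * (d : ℝ))}.ncard : ℝ)) ≤
      (1 + 1 / (d : ℝ)) ^ d * (Δ : ℝ) ^ d ∧
    (1 + 1 / (d : ℝ)) ^ d ≤ Real.exp 1 := by
  have hdR : (0 : ℝ) < d := by exact_mod_cast hd
  constructor
  · -- main bound
    have hΔpos : (0 : ℝ) < Δ := by
      rw [hΔ]; positivity
    set g : ℝ := gside Δ (i : ℤ) with hgdef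
    have hgval : g = (Δ : ℝ) / 2 ^ i := by rw [hgdef, gside, zpow_natCast]
    have hg : 0 < g := by rw [hgval]; positivity
    set r : ℝ := g / (2 * (d : ℝ)) with hrdef
    have hr0 : 0 ≤ r := by positivity
    have hrg : 2 * r ≤ g := by
      have hne : (d:ℝ) ≠ 0 := ne_of_gt hdR
      rw [hrdef, show 2 * (g / (2 * (d:ℝ))) = g / d from by field_simp]
      exact div_le_self hg.le (by exact_mod_cast hd)
    set f : Fin d → ℝ → ℝ := fun α c => ((cnt g r (z α) c).card : ℝ) with hfdef
    -- the box in pi-space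
    set pibox : Set (Fin d → ℝ) := Set.pi Set.univ (fun _ : Fin d => Set.Icc (0:ℝ) (Δ:ℝ))
      with hpiboxdef
    have hpre : (⇑((MeasurableEquiv.toLp 2 (Fin d → ℝ)).symm)) ⁻¹' pibox = shiftBox d Δ := by
      ext v
      simp only [hpiboxdef, Set.mem_preimage, Set.mem_pi, Set.mem_univ, forall_true_left,
        shiftBox, Set.mem_setOf_eq]
      rfl
    have hboxmeas : MeasurableSet (shiftBox d Δ) := by
      rw [← hpre]
      exact ((MeasurableEquiv.toLp 2 (Fin d → ℝ)).symm).measurable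
        (MeasurableSet.univ_pi fun _ => measurableSet_Icc)
    have hvolbox : volume (shiftBox d Δ) < ⊤ := by
      rw [← hpre, (EuclideanSpace.volume_preserving_symm_measurableEquiv_toLp (Fin d)).measure_preimage
        ((MeasurableSet.univ_pi fun _ => measurableSet_Icc).nullMeasurableSet)]
      rw [volume_pi_pi]
      exact ENNReal.prod_lt_top fun _ _ => by rw [Real.volume_Icc]; exact ENNReal.ofReal_lt_top
    -- measurability of product
    have hcoord : ∀ α : Fin d, Measurable (fun v : Pt d => v α) := fun α =>
      (measurable_pi_apply α).comp ((MeasurableEquiv.toLp 2 (Fin d → ℝ)).symm).measurable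
    have hmeas : Measurable (fun v : Pt d => ∏ α : Fin d, f α (v α)) :=
      Finset.measurable_prod _ (fun α _ => (cnt_measurable g r (z α)).comp (hcoord α))
    have hintprod : IntegrableOn (fun v : Pt d => ∏ α : Fin d, f α (v α)) (shiftBox d Δ) := by
      refine Integrable.mono'
        (integrableOn_const hvolbox.ne : IntegrableOn (fun _ => (3:ℝ)^d) _ _)
        hmeas.aestronglyMeasurable ?_
      filter_upwards with v
      rw [Real.norm_eq_abs, abs_of_nonneg (Finset.prod_nonneg fun α _ => Nat.cast_nonneg _)]
      calc ∏ α : Fin d, f α (v α) ≤ ∏ _α : Fin d, (3:ℝ) :=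
            Finset.prod_le_prod (fun α _ => Nat.cast_nonneg _)
              (fun α _ => by simp only [hfdef]; exact_mod_cast cnt_card_le hg hrg)
        _ = (3:ℝ)^d := by rw [Finset.prod_const, Finset.card_univ, Fintype.card_fin]
    -- step 1: mono
    have hmono : (∫ v in shiftBox d Δ,
        ({n : Fin d → ℤ | setDist d (cell d v g n) {z} ≤ g / (2 * (d:ℝ))}.ncard : ℝ))
        ≤ ∫ v in shiftBox d Δ, ∏ α : Fin d, f α (v α) := by
      refine integral_mono_of_nonneg ?_ hintprod ?_
      · filter_upwards with v; exact Nat.cast_nonneg _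
      · filter_upwards with v; exact pointwise_bound g r hg hrdef hr0 z v
    -- step 2: transfer to pi space
    have htrans : (∫ v in shiftBox d Δ, ∏ α : Fin d, f α (v α))
        = ∫ x in pibox, ∏ α : Fin d, f α (x α) := by
      rw [← hpre]
      exact (EuclideanSpace.volume_preserving_symm_measurableEquiv_toLp (Fin d)).setIntegral_preimage_emb
        (MeasurableEquiv.measurableEmbedding _) (fun x => ∏ α : Fin d, f α (x α)) pibox
    -- step 3: product formula
    have hpieq : Measure.pi (fun _ : Fin d => (volume : Measure ℝ).restrict (Set.Icc 0 (Δ:ℝ)))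
        = (volume : Measure (Fin d → ℝ)).restrict pibox := by
      refine Measure.pi_eq fun s hs => ?_
      rw [Measure.restrict_apply (MeasurableSet.univ_pi hs), hpiboxdef,
        ← Set.pi_inter_distrib, volume_pi_pi]
      exact Finset.prod_congr rfl fun α _ => (Measure.restrict_apply (hs α)).symm
    have hprod : (∫ x in pibox, ∏ α : Fin d, f α (x α))
        = ∏ α : Fin d, ∫ c in Set.Icc (0:ℝ) (Δ:ℝ), f α c := by
      have h2 := MeasureTheory.integral_fintype_prod_eq_prod (ι := Fin d) (E := fun _ => ℝ) f
        (μ := fun _ => (volume : Measure ℝ).restrict (Set.Icc 0 (Δ:ℝ)))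
      have h3 : (∫ x : Fin d → ℝ, (∏ α : Fin d, f α (x α))
          ∂(Measure.pi (fun _ : Fin d => (volume : Measure ℝ).restrict (Set.Icc 0 (Δ:ℝ)))))
          = ∏ α : Fin d, ∫ c, f α c ∂((volume : Measure ℝ).restrict (Set.Icc 0 (Δ:ℝ))) := h2
      rw [hpieq] at h3
      exact h3
    -- step 4: per-coordinate bound
    have hcoordint : ∀ α : Fin d, (∫ c in Set.Icc (0:ℝ) (Δ:ℝ), f α c)
        ≤ (Δ : ℝ) * (1 + 1 / (d:ℝ)) := by
      intro α
      have hNg : ((2^i : ℕ) : ℝ) * g = (Δ : ℝ) := by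
        rw [hgval]; push_cast; field_simp
      have := oneDim g r (z α) hg hr0 (2^i)
      rw [hNg] at this
      refine le_trans this ?_
      have : ((2^i : ℕ) : ℝ) * (g + 2*r) = (Δ:ℝ) * (1 + 1/(d:ℝ)) := by
        rw [hrdef, hgval]
        push_cast
        field_simp
      linarith [this]
    calc (∫ v in shiftBox d Δ,
          ({n : Fin d → ℤ | setDist d (cell d v g n) {z} ≤ g / (2 * (d:ℝ))}.ncard : ℝ))
        ≤ ∫ v in shiftBox d Δ, ∏ α : Fin d, f α (v α) := hmono
      _ = ∏ α : Fin d, ∫ c in Set.Icc (0:ℝ) (Δ:ℝ), f α c := by rw [htrans, hprod]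
      _ ≤ ∏ _α : Fin d, (Δ : ℝ) * (1 + 1/(d:ℝ)) :=
          Finset.prod_le_prod
            (fun α _ => integral_nonneg fun c => Nat.cast_nonneg _)
            (fun α _ => hcoordint α)
      _ = ((Δ : ℝ) * (1 + 1/(d:ℝ)))^d := by
          rw [Finset.prod_const, Finset.card_univ, Fintype.card_fin]
      _ = (1 + 1 / (d : ℝ)) ^ d * (Δ : ℝ) ^ d := by rw [mul_pow, mul_comm]
  · -- exp bound
    have h1 : (1 : ℝ) + 1 / d ≤ Real.exp (1 / d) := by
      have := Real.add_one_le_exp (1 / (d:ℝ))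
      linarith
    calc (1 + 1 / (d:ℝ)) ^ d ≤ (Real.exp (1 / d)) ^ d :=
          pow_le_pow_left₀ (by positivity) h1 d
      _ = Real.exp 1 := by
          rw [← Real.exp_nat_mul]
          congr 1
          field_simp

end
end

section
/- For every fixed finite set Z* ⊆ ℝ^d with |Z*| = k, the expected total number of center cells with respect to Z* over all grids G_0,…,G_L, taken over the uniformly random shift v ∈ [0,Δ]^d, is at most e·k·(L+1), and hence at most 6·k·L. -/
open scoped BigOperators Classical
open MeasureTheory

noncomputable section

/-! ### Auxiliary lemmas for `expected_center_cells_le` -/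

section CenterCellAux

open intervalIntegral Set

private lemma fract_ii' (a b : ℝ) : IntervalIntegrable Int.fract volume a b := by
  have h1 : IntervalIntegrable (fun x : ℝ => x) volume a b :=
    continuous_id.intervalIntegrable a b
  have h2 : IntervalIntegrable (fun x : ℝ => (⌊x⌋ : ℝ)) volume a b := by
    apply Monotone.intervalIntegrable
    intro x y hxy
    exact Int.cast_le.2 (Int.floor_le_floor hxy)
  exact h1.sub h2

private lemma integral_fract_unit' : ∫ x in (0:ℝ)..1, Int.fract x = 1/2 := by
  have h0 : (volume : Measure ℝ) {(1:ℝ)} = 0 := measure_singleton 1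
  have hne : ∀ᵐ x : ℝ, x ≠ 1 := by
    rw [ae_iff]
    simpa [Set.setOf_eq_eq_singleton] using h0
  have heq : ∫ x in (0:ℝ)..1, Int.fract x = ∫ x in (0:ℝ)..1, x := by
    apply intervalIntegral.integral_congr_ae
    filter_upwards [hne] with x hx hmem
    rw [Set.uIoc_of_le (by norm_num : (0:ℝ) ≤ 1)] at hmem
    exact Int.fract_eq_self.2 ⟨hmem.1.le, lt_of_le_of_ne hmem.2 hx⟩
  rw [heq, integral_id]
  norm_num

private lemma integral_fract_nat' (a : ℝ) (M : ℕ) :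
    ∫ x in a..a + M, Int.fract x = M / 2 := by
  have h := (Int.fract_periodic ℝ).intervalIntegral_add_zsmul_eq (M : ℤ) a
    (fun t₁ t₂ => fract_ii' t₁ t₂)
  have h2 : ∫ x in a..a + 1, Int.fract x = 1/2 := by
    rw [(Int.fract_periodic ℝ).intervalIntegral_add_eq a 0]
    simpa using integral_fract_unit'
  have h3 : a + ((M:ℤ) • (1:ℝ)) = a + M := by simp
  rw [h3] at h
  rw [h, h2]
  simp [zsmul_eq_mul]
  ring

private lemma integral_fract_sub (c g : ℝ) (hg : 0 < g) (M : ℕ) :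
    ∫ w in (0:ℝ)..(M*g), Int.fract (c/g - w/g) = M * g / 2 := by
  rw [intervalIntegral.integral_comp_sub_div Int.fract hg.ne' (c/g)]
  have h1 : c/g - (M:ℝ)*g/g = c/g - M := by field_simp
  have h2 : c/g - (0:ℝ)/g = (c/g - M) + M := by simp
  rw [h1, h2, integral_fract_nat']
  rw [smul_eq_mul]; ring

private lemma integral_fract_sub' (c g : ℝ) (hg : 0 < g) (M : ℕ) :
    ∫ w in (0:ℝ)..(M*g), Int.fract (w/g - c/g) = M * g / 2 := by
  rw [intervalIntegral.integral_comp_div_sub Int.fract hg.ne' (c/g)]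
  have h1 : (M:ℝ)*g/g - c/g = ((0:ℝ)/g - c/g) + M := by field_simp; ring
  rw [h1, integral_fract_nat']
  rw [smul_eq_mul]; ring

/-- Number of integers in the interval `[(z-r-w)/g - 1, (z+r-w)/g]`. -/
noncomputable def cnt (z r g w : ℝ) : ℕ :=
  (Finset.Icc ⌈(z - r - w)/g - 1⌉ ⌊(z + r - w)/g⌋).card

private lemma card_Icc_fract (A B : ℝ) (h : A + 1 ≤ B) :
    ((Finset.Icc ⌈A⌉ ⌊B⌋).card : ℝ) = B - A + 1 - Int.fract B - Int.fract (-A) := by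
  have hle : ⌈A⌉ ≤ ⌊B⌋ := by
    calc ⌈A⌉ ≤ ⌊A⌋ + 1 := Int.ceil_le_floor_add_one A
    _ = ⌊A + 1⌋ := (Int.floor_add_one A).symm
    _ ≤ ⌊B⌋ := Int.floor_le_floor h
  have h1 : ((Finset.Icc ⌈A⌉ ⌊B⌋).card : ℤ) = ⌊B⌋ + 1 - ⌈A⌉ := by
    rw [Int.card_Icc, Int.toNat_of_nonneg (by omega)]
  have h2 : ((Finset.Icc ⌈A⌉ ⌊B⌋).card : ℝ) = (⌊B⌋ : ℝ) + 1 - (⌈A⌉ : ℝ) := by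
    exact_mod_cast congrArg (Int.cast : ℤ → ℝ) h1
  have h3 : (⌊B⌋ : ℝ) = B - Int.fract B := (Int.self_sub_fract B).symm
  have h4 : (⌈A⌉ : ℝ) = A + Int.fract (-A) := by
    have h5 : (⌈A⌉ : ℤ) = -⌊-A⌋ := by rw [Int.floor_neg]; ring
    have h6 : ((-A) : ℝ) - Int.fract (-A) = (⌊-A⌋ : ℝ) := Int.self_sub_fract (-A)
    push_cast [h5]
    linarith
  rw [h2, h3, h4]; ring

private lemma cnt_cast (z r g w : ℝ) (hg : 0 < g) (_hr : 0 ≤ r) :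
    (cnt z r g w : ℝ) =
      (2*r/g + 2) - Int.fract ((z + r)/g - w/g) - Int.fract (w/g - (z - r)/g) := by
  have hAB : ((z - r - w)/g - 1) + 1 ≤ (z + r - w)/g := by
    simpa using (div_le_div_iff_of_pos_right hg).2 (show z - r - w ≤ z + r - w by linarith)
  have h := card_Icc_fract ((z - r - w)/g - 1) ((z + r - w)/g) hAB
  rw [cnt, h]
  have e1 : (z + r - w)/g = (z + r)/g - w/g := by ring
  have e2 : -((z - r - w)/g - 1) = (w/g - (z - r)/g) + 1 := by ring
  have e3 : (z + r - w)/g - ((z - r - w)/g - 1) + 1 = 2*r/g + 2 := by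
    field_simp
    ring
  rw [e1, e2, Int.fract_add_one] at *
  linarith [e3]

private lemma ii_bdd {f : ℝ → ℝ} (hf : Measurable f) (hb : ∀ x, |f x| ≤ 1) (a b : ℝ) :
    IntervalIntegrable f volume a b := by
  rw [intervalIntegrable_iff]
  apply Measure.integrableOn_of_bounded (M := 1) measure_Ioc_lt_top.ne
    hf.aestronglyMeasurable
  exact ae_of_all _ (fun x => by simpa [Real.norm_eq_abs] using hb x)

private lemma fract_abs_le (x : ℝ) : |Int.fract x| ≤ 1 := by
  rw [abs_of_nonneg (Int.fract_nonneg x)]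
  exact (Int.fract_lt_one x).le

private lemma cnt_meas (z r g : ℝ) (hg : 0 < g) (hr : 0 ≤ r) :
    Measurable (fun w => (cnt z r g w : ℝ)) := by
  have h : (fun w => (cnt z r g w : ℝ)) =
      fun w => (2*r/g + 2) - Int.fract ((z + r)/g - w/g) - Int.fract (w/g - (z - r)/g) := by
    funext w; exact cnt_cast z r g w hg hr
  rw [h]
  apply Measurable.sub
  apply Measurable.sub
  · exact measurable_const
  · exact measurable_fract.comp (by fun_prop)
  · exact measurable_fract.comp (by fun_prop)

private lemma cnt_integral (z r g : ℝ) (hg : 0 < g) (hr : 0 ≤ r) (M : ℕ) :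
    ∫ w in (0:ℝ)..((M:ℝ)*g), (cnt z r g w : ℝ) = (M:ℝ) * g * (2*r/g + 1) := by
  have hcongr : ∀ w ∈ Set.uIcc (0:ℝ) ((M:ℝ)*g), (cnt z r g w : ℝ) =
      (2*r/g + 2) - Int.fract ((z + r)/g - w/g) - Int.fract (w/g - (z - r)/g) :=
    fun w _ => cnt_cast z r g w hg hr
  rw [intervalIntegral.integral_congr hcongr]
  have i1 : IntervalIntegrable (fun w => Int.fract ((z + r)/g - w/g)) volume 0 ((M:ℝ)*g) :=
    ii_bdd (measurable_fract.comp (by fun_prop)) (fun x => fract_abs_le _) _ _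
  have i2 : IntervalIntegrable (fun w => Int.fract (w/g - (z - r)/g)) volume 0 ((M:ℝ)*g) :=
    ii_bdd (measurable_fract.comp (by fun_prop)) (fun x => fract_abs_le _) _ _
  have ic : IntervalIntegrable (fun _ : ℝ => 2*r/g + 2) volume 0 ((M:ℝ)*g) :=
    intervalIntegrable_const
  rw [intervalIntegral.integral_sub (ic.sub i1) i2, intervalIntegral.integral_sub ic i1,
    intervalIntegral.integral_const, integral_fract_sub (z + r) g hg M,
    integral_fract_sub' (z - r) g hg M]
  rw [smul_eq_mul]
  ring

private lemma cnt_setIntegral (z r g : ℝ) (hg : 0 < g) (hr : 0 ≤ r) (M : ℕ) (Δr : ℝ)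
    (hMg : (M:ℝ) * g = Δr) :
    ∫ w in Set.Icc (0:ℝ) Δr, (cnt z r g w : ℝ) = Δr * (2*r/g + 1) := by
  have h0 : (0:ℝ) ≤ Δr := by
    rw [← hMg]; positivity
  rw [MeasureTheory.integral_Icc_eq_integral_Ioc, ← intervalIntegral.integral_of_le h0,
    ← hMg, cnt_integral z r g hg hr M]

private lemma cnt_integrableOn (z r g : ℝ) (hg : 0 < g) (hr : 0 ≤ r) (Δr : ℝ) :
    IntegrableOn (fun w => (cnt z r g w : ℝ)) (Set.Icc (0:ℝ) Δr) volume := by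
  apply Measure.integrableOn_of_bounded (M := 2*r/g + 2 + 2) measure_Icc_lt_top.ne
    (cnt_meas z r g hg hr).aestronglyMeasurable
  apply ae_of_all
  intro w
  rw [cnt_cast z r g w hg hr, Real.norm_eq_abs]
  have b1 := fract_abs_le ((z + r)/g - w/g)
  have b2 := fract_abs_le (w/g - (z - r)/g)
  have n1 := Int.fract_nonneg ((z + r)/g - w/g)
  have n2 := Int.fract_nonneg (w/g - (z - r)/g)
  have hK : 0 ≤ 2*r/g := by positivity
  rw [abs_le]
  constructor <;> [skip; skip] <;> cases' abs_le.1 b1 with b1a b1b <;>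
    cases' abs_le.1 b2 with b2a b2b <;> linarith

private lemma shiftBox_eq (d Δ : ℕ) :
    shiftBox d Δ = ((MeasurableEquiv.toLp 2 (Fin d → ℝ)).symm) ⁻¹'
      (Set.pi Set.univ (fun _ : Fin d => Set.Icc (0:ℝ) (Δ:ℝ))) := by
  ext v
  simp only [shiftBox, Set.mem_setOf_eq, Set.mem_preimage, Set.mem_univ_pi,
    MeasurableEquiv.coe_toLp_symm]

private lemma shiftBox_meas (d Δ : ℕ) : MeasurableSet (shiftBox d Δ) := by
  rw [shiftBox_eq]
  exact (MeasurableEquiv.toLp 2 (Fin d → ℝ)).symm.measurable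
    (MeasurableSet.univ_pi fun _ => measurableSet_Icc)

private lemma prod_box_integral (d : ℕ) (Δ : ℕ) (h : Fin d → ℝ → ℝ)
    (hint : ∀ α, IntegrableOn (h α) (Set.Icc (0:ℝ) (Δ:ℝ)) volume) :
    IntegrableOn (fun v : Pt d => ∏ α, h α (v α)) (shiftBox d Δ) volume ∧
    ∫ v in shiftBox d Δ, ∏ α, h α (v α) = ∏ α, ∫ w in Set.Icc (0:ℝ) (Δ:ℝ), h α w := by
  set f : Fin d → ℝ → ℝ := fun α => (Set.Icc (0:ℝ) (Δ:ℝ)).indicator (h α) with hf_def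
  have hf : ∀ α, Integrable (f α) volume :=
    fun α => (hint α).integrable_indicator measurableSet_Icc
  have hF : Integrable (fun x : Fin d → ℝ => ∏ α, f α (x α)) :=
    Integrable.fintype_prod (𝕜 := ℝ) hf
  have mp := EuclideanSpace.volume_preserving_symm_measurableEquiv_toLp (Fin d)
  have key : (fun v : Pt d => ∏ α, f α (v α)) =
      (fun x : Fin d → ℝ => ∏ α, f α (x α)) ∘ ((MeasurableEquiv.toLp 2 (Fin d → ℝ)).symm) := by
    funext v
    simp [MeasurableEquiv.coe_toLp_symm, Function.comp]
  have hcomp_int : Integrable (fun v : Pt d => ∏ α, f α (v α)) volume := by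
    rw [key]
    exact (mp.integrable_comp_emb (MeasurableEquiv.measurableEmbedding _)).2 hF
  have indic : (fun v : Pt d => ∏ α, f α (v α)) =
      (shiftBox d Δ).indicator (fun v => ∏ α, h α (v α)) := by
    funext v
    by_cases hv : v ∈ shiftBox d Δ
    · rw [Set.indicator_of_mem hv]
      exact Finset.prod_congr rfl (fun α _ => Set.indicator_of_mem (hv α) _)
    · rw [Set.indicator_of_notMem hv]
      have hex : ∃ α, v α ∉ Set.Icc (0:ℝ) (Δ:ℝ) := by
        by_contra hc
        push_neg at hc
        exact hv hc
      obtain ⟨α, hα⟩ := hex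
      exact Finset.prod_eq_zero (Finset.mem_univ α) (Set.indicator_of_notMem hα _)
  constructor
  · rw [indic] at hcomp_int
    exact (integrable_indicator_iff (shiftBox_meas d Δ)).1 hcomp_int
  · calc ∫ v in shiftBox d Δ, ∏ α, h α (v α)
        = ∫ v : Pt d, (shiftBox d Δ).indicator (fun v => ∏ α, h α (v α)) v := by
          rw [MeasureTheory.integral_indicator (shiftBox_meas d Δ)]
      _ = ∫ v : Pt d, ∏ α, f α (v α) := by rw [← indic]
      _ = ∫ x : Fin d → ℝ, ∏ α, f α (x α) := by
          rw [key]
          exact mp.integral_comp (MeasurableEquiv.measurableEmbedding _) (fun x : Fin d → ℝ => ∏ α, f α (x α))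
      _ = ∏ α, ∫ w : ℝ, f α w := integral_fintype_prod_eq_prod (ι := Fin d) f
      _ = ∏ α, ∫ w in Set.Icc (0:ℝ) (Δ:ℝ), h α w :=
          Finset.prod_congr rfl (fun α _ => MeasureTheory.integral_indicator measurableSet_Icc)

private lemma coord_le_dist {d : ℕ} (x z : Pt d) (α : Fin d) : |x α - z α| ≤ dist x z := by
  rw [EuclideanSpace.dist_eq]
  have h1 : |x α - z α| = Real.sqrt (dist (x α) (z α) ^ 2) := by
    rw [Real.sqrt_sq dist_nonneg, Real.dist_eq]
  rw [h1]
  apply Real.sqrt_le_sqrt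
  exact Finset.single_le_sum (fun i _ => sq_nonneg (dist (x i) (z i))) (Finset.mem_univ α)

private lemma exists_coord {d : ℕ} (hd : 1 ≤ d) {v : Pt d} {Zstar : Finset (Pt d)}
    {g r : ℝ} (hg : 0 < g) {n : Fin d → ℤ}
    (hZ : Zstar.Nonempty)
    (h : setDist d (cell d v g n) (Zstar : Set (Pt d)) ≤ r) :
    ∃ z ∈ Zstar, ∀ α, v α + (n α : ℝ) * g ≤ z α + r ∧
      z α - r ≤ v α + ((n α : ℝ) + 1) * g := by
  by_contra hcon
  push_neg at hcon
  have hne : Nonempty (Fin d) := ⟨⟨0, hd⟩⟩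
  have huniv : (Finset.univ : Finset (Fin d)).Nonempty := Finset.univ_nonempty
  set b : Pt d → ℝ := fun z => Finset.univ.sup' huniv
    (fun α => max (v α + (n α : ℝ) * g - z α) (z α - (v α + ((n α : ℝ) + 1) * g))) with hb
  have hbz : ∀ z ∈ Zstar, r < b z := by
    intro z hz
    obtain ⟨α, hα⟩ := hcon z hz
    simp only [hb]
    rw [Finset.lt_sup'_iff]
    refine ⟨α, Finset.mem_univ α, ?_⟩
    rw [lt_max_iff]
    by_cases h1 : v α + (n α : ℝ) * g ≤ z α + r
    · exact Or.inr (by linarith [hα h1])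
    · push_neg at h1
      exact Or.inl (by linarith)
  have hdist : ∀ x ∈ cell d v g n, ∀ z : Pt d, b z ≤ dist x z := by
    intro x hx z
    simp only [hb]
    apply Finset.sup'_le
    intro α _
    have h1 := (hx α).1
    have h2 := (hx α).2
    have h4 := abs_le.1 (coord_le_dist x z α)
    apply max_le <;> [linarith [h4.2]; linarith [h4.1]]
  have hcorner : ((WithLp.equiv 2 (Fin d → ℝ)).symm (fun α => v α + (n α : ℝ) * g))
      ∈ cell d v g n := by
    intro α
    rw [WithLp.equiv_symm_apply, PiLp.toLp_apply]
    constructor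
    · exact le_refl _
    · nlinarith
  obtain ⟨z₀, hz₀⟩ := hZ
  have himg : (Set.image2 dist (cell d v g n) (Zstar : Set (Pt d))).Nonempty :=
    ⟨_, Set.mem_image2_of_mem hcorner (Finset.mem_coe.2 hz₀)⟩
  have hlb : ∀ y ∈ Set.image2 dist (cell d v g n) (Zstar : Set (Pt d)),
      Zstar.inf' ⟨z₀, hz₀⟩ b ≤ y := by
    rintro y ⟨x, hx, z, hz, rfl⟩
    exact (Finset.inf'_le b (Finset.mem_coe.1 hz)).trans (hdist x hx z)
  have h5 : Zstar.inf' ⟨z₀, hz₀⟩ b ≤ setDist d (cell d v g n) (Zstar : Set (Pt d)) :=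
    le_csInf himg hlb
  have h6 : r < Zstar.inf' ⟨z₀, hz₀⟩ b := (Finset.lt_inf'_iff _).2 hbz
  linarith

private lemma count_bound {d : ℕ} (hd : 1 ≤ d) (Δ : ℕ) (v : Pt d) (Zstar : Finset (Pt d))
    (hZ : Zstar.Nonempty) (i : ℤ) (hg : 0 < gside Δ i) :
    ({n : Fin d → ℤ | IsCenterCell d Δ v Zstar i n}.ncard : ℝ) ≤
      ∑ z ∈ Zstar, ∏ α, (cnt (z α) (gside Δ i / (2 * (d:ℝ))) (gside Δ i) (v α) : ℝ) := by
  classical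
  set g : ℝ := gside Δ i with hgdef
  set r : ℝ := g / (2 * (d:ℝ)) with hrdef
  set S : Pt d → Finset (Fin d → ℤ) := fun z => Fintype.piFinset
    (fun α => Finset.Icc ⌈(z α - r - v α)/g - 1⌉ ⌊(z α + r - v α)/g⌋) with hS
  have hsub : {n : Fin d → ℤ | IsCenterCell d Δ v Zstar i n} ⊆ ↑(Zstar.biUnion S) := by
    intro n hn
    obtain ⟨z, hz, hcoord⟩ := exists_coord hd hg hZ hn
    refine Finset.mem_coe.2 (Finset.mem_biUnion.2 ⟨z, hz, ?_⟩)
    simp only [hS, Fintype.mem_piFinset, Finset.mem_Icc]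
    intro α
    obtain ⟨h1, h2⟩ := hcoord α
    constructor
    · rw [Int.ceil_le]
      push_cast
      rw [sub_le_iff_le_add, div_le_iff₀ hg]
      linarith
    · rw [Int.le_floor]
      rw [le_div_iff₀ hg]
      linarith
  have h1 : ({n : Fin d → ℤ | IsCenterCell d Δ v Zstar i n}.ncard : ℝ) ≤
      ((Zstar.biUnion S).card : ℝ) := by
    have h0 := Set.ncard_le_ncard hsub (Zstar.biUnion S).finite_toSet
    rw [Set.ncard_coe_finset] at h0
    exact_mod_cast h0
  refine h1.trans ?_
  have h2 : ((Zstar.biUnion S).card : ℝ) ≤ ∑ z ∈ Zstar, ((S z).card : ℝ) := by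
    exact_mod_cast Nat.cast_le.2 (Finset.card_biUnion_le)
  refine h2.trans (le_of_eq (Finset.sum_congr rfl (fun z _ => ?_)))
  rw [hS, Fintype.card_piFinset]
  push_cast
  rfl

end CenterCellAux

/-- for every fixed `Z*` with `|Z*| = k`, the expected total number of
center cells with respect to `Z*` over all grids `G_0,…,G_L`, over the uniformly
random shift `v ∈ [0,Δ]^d`, is at most `e·k·(L+1)`, and hence at most `6·k·L`. -/
theorem expected_center_cells_le
    (d k L Δ : ℕ) (hd : 1 ≤ d) (hk : 1 ≤ k) (hL : 1 ≤ L) (hΔ : Δ = 2 ^ L)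
    (Zstar : Finset (Pt d)) (hZ : Zstar.card = k) :
    (∫ v in shiftBox d Δ,
        (∑ i ∈ Finset.range (L + 1),
          ({n : Fin d → ℤ | IsCenterCell d Δ v Zstar i n}.ncard : ℝ))) ≤
      Real.exp 1 * (k : ℝ) * ((L : ℝ) + 1) * (Δ : ℝ) ^ d ∧
    Real.exp 1 * (k : ℝ) * ((L : ℝ) + 1) ≤ 6 * (k : ℝ) * (L : ℝ) := by
  have hd0 : (0:ℝ) < d := by exact_mod_cast hd
  have hk0 : (1:ℝ) ≤ k := by exact_mod_cast hk
  have hL0 : (1:ℝ) ≤ L := by exact_mod_cast hL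
  have hΔpos : (0:ℝ) < (Δ:ℝ) := by
    have : 0 < Δ := by rw [hΔ]; positivity
    exact_mod_cast this
  have hexp3 : Real.exp 1 ≤ 2.7182818286 := Real.exp_one_lt_d9.le
  constructor
  · -- the main expectation bound
    by_cases hint : IntegrableOn (fun v : Pt d =>
        ∑ i ∈ Finset.range (L + 1),
          ({n : Fin d → ℤ | IsCenterCell d Δ v Zstar i n}.ncard : ℝ))
        (shiftBox d Δ) volume
    swap
    · rw [MeasureTheory.integral_undef hint]
      positivity
    · have hZne : Zstar.Nonempty := Finset.card_pos.1 (by rw [hZ]; omega)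
      have hgpos : ∀ i : ℕ, 0 < gside Δ (i:ℤ) := fun i => by
        rw [gside]
        positivity
      -- value of each product term over the box
      have hterm : ∀ i : ℕ, i ≤ L → ∀ z : Pt d,
          IntegrableOn (fun v : Pt d => ∏ α,
            (cnt (z α) (gside Δ (i:ℤ) / (2 * (d:ℝ))) (gside Δ (i:ℤ)) (v α) : ℝ))
            (shiftBox d Δ) volume ∧
          (∫ v in shiftBox d Δ, ∏ α,
            (cnt (z α) (gside Δ (i:ℤ) / (2 * (d:ℝ))) (gside Δ (i:ℤ)) (v α) : ℝ)) =
            ((Δ:ℝ) * (1/(d:ℝ) + 1)) ^ d := by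
        intro i hi z
        set g : ℝ := gside Δ (i:ℤ) with hgdef
        have hg : 0 < g := hgpos i
        set r : ℝ := g / (2 * (d:ℝ)) with hrdef
        have hr : 0 ≤ r := by positivity
        have hMg : ((2^i : ℕ) : ℝ) * g = (Δ:ℝ) := by
          rw [hgdef, gside]
          have h2 : ((2:ℝ) : ℝ) ^ ((i:ℕ) : ℤ) = (2:ℝ)^i := zpow_natCast 2 i
          push_cast
          rw [h2]
          field_simp
        have hval : ∀ α : Fin d, (∫ w in Set.Icc (0:ℝ) ((Δ:ℝ)),
            (cnt (z α) r g w : ℝ)) = (Δ:ℝ) * (1/(d:ℝ) + 1) := by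
          intro α
          rw [cnt_setIntegral (z α) r g hg hr (2^i) ((Δ:ℝ)) hMg]
          have : 2 * r / g = 1/(d:ℝ) := by
            rw [hrdef]
            field_simp
          rw [this]
        obtain ⟨hI, hE⟩ := prod_box_integral d Δ
          (fun α w => (cnt (z α) r g w : ℝ))
          (fun α => cnt_integrableOn (z α) r g hg hr ((Δ:ℝ)))
        refine ⟨hI, ?_⟩
        rw [hE]
        rw [Finset.prod_congr rfl (fun α _ => hval α), Finset.prod_const,
          Finset.card_univ, Fintype.card_fin]
      -- the dominating function
      have hGint : IntegrableOn (fun v : Pt d =>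
          ∑ i ∈ Finset.range (L+1), ∑ z ∈ Zstar, ∏ α,
            (cnt (z α) (gside Δ (i:ℤ) / (2 * (d:ℝ))) (gside Δ (i:ℤ)) (v α) : ℝ))
          (shiftBox d Δ) volume := by
        apply MeasureTheory.integrable_finset_sum
        intro i hi
        apply MeasureTheory.integrable_finset_sum
        intro z hz
        exact (hterm i (by simpa using Nat.lt_succ_iff.1 (Finset.mem_range.1 hi)) z).1
      have hmono : ∀ v ∈ shiftBox d Δ,
          (∑ i ∈ Finset.range (L + 1),
            ({n : Fin d → ℤ | IsCenterCell d Δ v Zstar i n}.ncard : ℝ)) ≤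
          ∑ i ∈ Finset.range (L+1), ∑ z ∈ Zstar, ∏ α,
            (cnt (z α) (gside Δ (i:ℤ) / (2 * (d:ℝ))) (gside Δ (i:ℤ)) (v α) : ℝ) := by
        intro v _
        apply Finset.sum_le_sum
        intro i _
        exact count_bound hd Δ v Zstar hZne (i:ℤ) (hgpos i)
      have hstep1 := MeasureTheory.setIntegral_mono_on hint hGint (shiftBox_meas d Δ) hmono
      refine hstep1.trans ?_
      -- compute the integral of the dominating function
      have hGval : (∫ v in shiftBox d Δ,
          ∑ i ∈ Finset.range (L+1), ∑ z ∈ Zstar, ∏ α,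
            (cnt (z α) (gside Δ (i:ℤ) / (2 * (d:ℝ))) (gside Δ (i:ℤ)) (v α) : ℝ)) =
          ((L:ℝ)+1) * ((k:ℝ) * (((Δ:ℝ) * (1/(d:ℝ) + 1)) ^ d)) := by
        rw [MeasureTheory.integral_finset_sum _ (fun i hi =>
          MeasureTheory.integrable_finset_sum _ (fun z hz =>
            (hterm i (by simpa using Nat.lt_succ_iff.1 (Finset.mem_range.1 hi)) z).1))]
        have : ∀ i ∈ Finset.range (L+1), (∫ v in shiftBox d Δ,
            ∑ z ∈ Zstar, ∏ α,
              (cnt (z α) (gside Δ (i:ℤ) / (2 * (d:ℝ))) (gside Δ (i:ℤ)) (v α) : ℝ)) =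
            (k:ℝ) * (((Δ:ℝ) * (1/(d:ℝ) + 1)) ^ d) := by
          intro i hi
          have hi' : i ≤ L := by simpa using Nat.lt_succ_iff.1 (Finset.mem_range.1 hi)
          rw [MeasureTheory.integral_finset_sum _ (fun z hz => (hterm i hi' z).1)]
          rw [Finset.sum_congr rfl (fun z hz => (hterm i hi' z).2), Finset.sum_const, hZ,
            nsmul_eq_mul]
        rw [Finset.sum_congr rfl this, Finset.sum_const, Finset.card_range, nsmul_eq_mul]
        push_cast
        ring
      rw [hGval]
      -- final numeric bound
      have hpow : ((Δ:ℝ) * (1/(d:ℝ) + 1)) ^ d ≤ Real.exp 1 * (Δ:ℝ)^d := by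
        rw [mul_pow]
        have h1 : (1/(d:ℝ) + 1) ≤ Real.exp (1/(d:ℝ)) := by
          have := Real.add_one_le_exp (1/(d:ℝ))
          linarith
        have h2 : (1/(d:ℝ) + 1)^d ≤ (Real.exp (1/(d:ℝ)))^d :=
          pow_le_pow_left₀ (by positivity) h1 d
        have h3 : (Real.exp (1/(d:ℝ)))^d = Real.exp 1 := by
          rw [← Real.exp_nat_mul]
          congr 1
          field_simp
        have h4 : (0:ℝ) ≤ (Δ:ℝ)^d := by positivity
        calc (Δ:ℝ)^d * (1/(d:ℝ) + 1)^d ≤ (Δ:ℝ)^d * Real.exp 1 := by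
              apply mul_le_mul_of_nonneg_left _ h4
              rw [← h3]; exact h2
          _ = Real.exp 1 * (Δ:ℝ)^d := by ring
      calc ((L:ℝ)+1) * ((k:ℝ) * (((Δ:ℝ) * (1/(d:ℝ) + 1)) ^ d))
          ≤ ((L:ℝ)+1) * ((k:ℝ) * (Real.exp 1 * (Δ:ℝ)^d)) := by
            apply mul_le_mul_of_nonneg_left _ (by linarith)
            apply mul_le_mul_of_nonneg_left hpow (by linarith)
        _ = Real.exp 1 * (k:ℝ) * ((L:ℝ)+1) * (Δ:ℝ)^d := by ring
  · -- e·k·(L+1) ≤ 6·k·L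
    nlinarith [Real.exp_pos 1, mul_le_mul_of_nonneg_left hL0 (le_of_lt (by positivity : (0:ℝ) < (k:ℝ))),
      mul_pos (lt_of_lt_of_le one_pos hk0) (lt_of_lt_of_le one_pos hL0)]


end
end

section
/- Let Z* ⊆ ℝ^d with |Z*| = k and cost(Q,Z*) = OPT. Then for every i ∈ {0,…,L}: Σ over cells C ∈ G_i that are not center cells with respect to Z* of |C∩Q|/T_i(o) is at most 400·k·(OPT/o). -/
open scoped BigOperators Classical
open MeasureTheory

noncomputable section

lemma mem_cell_iff_idx (d : ℕ) (v : Pt d) {g : ℝ} (hg : 0 < g) (p : Pt d) (n : Fin d → ℤ) :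
    p ∈ cell d v g n ↔ idx d v g p = n := by
  simp only [cell, Set.mem_setOf_eq, idx, funext_iff]
  refine forall_congr' fun α => ?_
  rw [Int.floor_eq_iff, le_div_iff₀ hg, div_lt_iff₀ hg]
  constructor
  · rintro ⟨h1, h2⟩; constructor <;> nlinarith
  · rintro ⟨h1, h2⟩; constructor <;> nlinarith

/-- if `Z*` is an optimal set of `k` centers, then for every
`i ∈ {0,…,L}`, the sum over non-center cells `C ∈ G_i` of `|C∩Q|/T_i(o)` is at most
`400·k·(OPT/o)`. -/
theorem noncenter_cells_mass_bound
    (d k L Δ : ℕ) (hd : 1 ≤ d) (hk : 1 ≤ k) (hL : 1 ≤ L) (hΔ : Δ = 2 ^ L)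
    (v : Pt d) (Q : Finset (Pt d))
    (hQ : ∀ p ∈ Q, ∀ α : Fin d, ∃ m : ℤ, 1 ≤ m ∧ m ≤ (Δ : ℤ) ∧ p α = (m : ℝ))
    (o : ℝ) (ho : 0 < o)
    (Zstar : Finset (Pt d)) (hZcard : Zstar.card = k)
    (hZopt : cost d Q Zstar = OPTcost d k Q) :
    ∀ i : ℕ, i ≤ L →
      (∑' n : {n : Fin d → ℤ // ¬ IsCenterCell d Δ v Zstar i n},
          (cellCount d Q v (gside Δ i) n : ℝ) / Tthr d k Δ o i) ≤
        400 * (k : ℝ) * (OPTcost d k Q / o) := by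
  intro i hi
  have hdpos : (0:ℝ) < d := by exact_mod_cast hd
  have hkpos : (0:ℝ) < k := by exact_mod_cast hk
  have hΔpos : (0:ℝ) < Δ := by rw [hΔ]; positivity
  have hgpos : 0 < gside Δ (i:ℤ) := by
    unfold gside
    exact div_pos hΔpos (zpow_pos (by norm_num) _)
  set g := gside Δ (i:ℤ) with hgdef
  set T := Tthr d k Δ o i with hTdef
  have hT : 0 < T := by
    rw [hTdef]; unfold Tthr; rw [← hgdef]
    exact div_pos (mul_pos (pow_pos (div_pos hdpos hgpos) 2) ho) (by positivity)
  have hZne : Zstar.Nonempty := Finset.card_pos.mp (by rw [hZcard]; exact hk)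
  obtain ⟨z0, hz0⟩ := hZne
  have hndne : ∀ q : Pt d, ((dist q) '' (Zstar : Set (Pt d))).Nonempty :=
    fun q => ⟨dist q z0, z0, hz0, rfl⟩
  have hnd0 : ∀ q : Pt d, 0 ≤ nearDist d q Zstar := by
    intro q
    exact Real.sInf_nonneg (by rintro x ⟨z, hz, rfl⟩; exact dist_nonneg)
  -- points in non-center cells are far from Zstar
  have hfar : ∀ n : Fin d → ℤ, ¬ IsCenterCell d Δ v Zstar i n →
      ∀ q : Pt d, q ∈ cell d v g n → g / (2 * d) ≤ nearDist d q Zstar := by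
    intro n hn q hqc
    unfold IsCenterCell at hn
    rw [← hgdef] at hn
    push_neg at hn
    refine le_csInf (hndne q) ?_
    rintro b ⟨z, hz, rfl⟩
    have hb : BddBelow (Set.image2 dist (cell d v g n) (Zstar : Set (Pt d))) := by
      refine ⟨0, ?_⟩
      rintro x ⟨a, b', _, _, rfl⟩
      exact dist_nonneg
    have hle : setDist d (cell d v g n) (Zstar : Set (Pt d)) ≤ dist q z :=
      csInf_le hb (Set.mem_image2_of_mem hqc hz)
    linarith
  -- 1/T in closed form
  have hTeq : (1:ℝ) / T = (400 * k / o) * (g / (2 * d)) ^ 2 := by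
    rw [hTdef]; unfold Tthr; rw [← hgdef]
    have h1 : (d:ℝ) ≠ 0 := ne_of_gt hdpos
    have h2 : g ≠ 0 := ne_of_gt hgpos
    have h3 : o ≠ 0 := ne_of_gt ho
    have h4 : (k:ℝ) ≠ 0 := ne_of_gt hkpos
    field_simp
    ring
  classical
  set P : Set (Fin d → ℤ) := {n | ¬ IsCenterCell d Δ v Zstar i n} with hP
  set F : (Fin d → ℤ) → ℝ := fun n => (cellCount d Q v g n : ℝ) / T with hF
  set S : Finset (Fin d → ℤ) := Q.image (idx d v g) with hS
  have hcount : ∀ n : Fin d → ℤ,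
      Q.filter (fun p => p ∈ cell d v g n) = Q.filter (fun p => idx d v g p = n) := by
    intro n
    apply Finset.filter_congr
    intro p _
    simp [mem_cell_iff_idx d v hgpos p n]
  have h1 : (∑' n : {n : Fin d → ℤ // ¬ IsCenterCell d Δ v Zstar i n},
      (cellCount d Q v (gside Δ i) (n : Fin d → ℤ) : ℝ) / Tthr d k Δ o i)
      = ∑' n : (Fin d → ℤ), P.indicator F n := by
    rw [← tsum_subtype P F]
    rfl
  rw [h1]
  have hzero : ∀ n ∉ S, P.indicator F n = 0 := by
    intro n hn
    by_cases hc : n ∈ P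
    · rw [Set.indicator_of_mem hc, hF]
      have : Q.filter (fun p => p ∈ cell d v g n) = ∅ := by
        rw [hcount]
        refine Finset.filter_eq_empty_iff.mpr ?_
        intro p hp hpn
        exact hn (hS ▸ Finset.mem_image.mpr ⟨p, hp, hpn⟩)
      simp [cellCount, this]
    · exact Set.indicator_of_notMem hc F
  rw [tsum_eq_sum hzero]
  have hstep : ∀ n ∈ S, P.indicator F n ≤
      ∑ p ∈ Q.filter (fun p => idx d v g p = n), (400 * (k:ℝ) / o) * nearDist d p Zstar ^ 2 := by
    intro n _
    have hterm_nonneg : ∀ p ∈ Q.filter (fun p => idx d v g p = n),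
        (0:ℝ) ≤ (400 * (k:ℝ) / o) * nearDist d p Zstar ^ 2 := by
      intro p _
      have : (0:ℝ) ≤ 400 * (k:ℝ) / o := by positivity
      positivity
    by_cases hc : n ∈ P
    · rw [Set.indicator_of_mem hc, hF]
      beta_reduce
      have hcc : (cellCount d Q v g n : ℝ) / T
          = ∑ _p ∈ Q.filter (fun p => idx d v g p = n), (1 / T) := by
        rw [Finset.sum_const, cellCount, hcount, nsmul_eq_mul]
        ring
      rw [hcc]
      refine Finset.sum_le_sum ?_
      intro p hp
      rw [Finset.mem_filter] at hp
      have hpc : p ∈ cell d v g n := (mem_cell_iff_idx d v hgpos p n).mpr hp.2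
      have hnd := hfar n hc p hpc
      have hnd2 : (g / (2 * d)) ^ 2 ≤ nearDist d p Zstar ^ 2 := by
        have h0 : (0:ℝ) ≤ g / (2 * d) := by positivity
        nlinarith
      rw [hTeq]
      have hco : (0:ℝ) ≤ 400 * (k:ℝ) / o := by positivity
      nlinarith
    · rw [Set.indicator_of_notMem hc]
      exact Finset.sum_nonneg hterm_nonneg
  calc ∑ n ∈ S, P.indicator F n
      ≤ ∑ n ∈ S, ∑ p ∈ Q.filter (fun p => idx d v g p = n),
          (400 * (k:ℝ) / o) * nearDist d p Zstar ^ 2 := Finset.sum_le_sum hstep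
    _ = ∑ p ∈ Q, (400 * (k:ℝ) / o) * nearDist d p Zstar ^ 2 := by
        refine Finset.sum_fiberwise_of_maps_to ?_ _
        intro p hp
        exact hS ▸ Finset.mem_image_of_mem _ hp
    _ = 400 * (k:ℝ) * (OPTcost d k Q / o) := by
        rw [← Finset.mul_sum]
        have : ∑ p ∈ Q, nearDist d p Zstar ^ 2 = cost d Q Zstar := rfl
        rw [this, hZopt]
        ring


end
end

section
/- For each i ∈ {0,…,L}, let (h′_i(p))_{p∈Q} be λ-wise independent {0,1}-valued random variables with P[h′_i(p) = 1] = min(4·10⁴·ε⁻²·γ⁻¹·λ/T_i(o), 1) for every p ∈ Q. Then with probability at least 1 − δ/10, simultaneously for every i ∈ {0,…,L} with T_i(o) ≥ 4·10⁴·ε⁻²·γ⁻¹·λ: either |Σ_{p∈Q_i} h′_i(p) − |Q_i|·4·10⁴·ε⁻²·γ⁻¹·λ/T_i(o)| ≤ 4·10³·ε⁻¹·λ, or (1 − 0.01·ε)·|Q_i|·4·10⁴·ε⁻²·γ⁻¹·λ/T_i(o) ≤ Σ_{p∈Q_i} h′_i(p) ≤ (1 + 0.01·ε)·|Q_i|·4·10⁴·ε⁻²·γ⁻¹·λ/T_i(o).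 -/
open scoped BigOperators Classical
open MeasureTheory

noncomputable section

/-!
At level `i` the sample count is a sum of `|Q_i|` Bernoulli variables of mean
`p = 4·10⁴ ε⁻² γ⁻¹ λ / T_i(o)`, independent in groups of `λ = 2m`. Expanding the centered moment
`E[(∑ₐ (h a - p))^(2m)]` over index tuples `f : Fin (2m) → Q_i`, each term involves at most `2m`
variables and therefore factors; it vanishes as soon as some index occurs exactly once, and is
otherwise at most `p^r`, where `r ≤ m` is the number of distinct indices. Encoding a tuple by its
set of first occurrences bounds the weighted count of such tuples, which gives the moment bound
`(8m · max(μ, 2m))^m` with `μ = |Q_i| p`. At the deviation `t = max(4·10³ ε⁻¹ λ, 0.01 ε μ)` one has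
`t² ≥ 40m · max(μ, 2m)`, so Markov's inequality bounds the failure probability of level `i` by
`5⁻ᵐ`, and `λ ≥ 10 (L + log₂(1/δ) + 1)` makes the union bound `(L + 1) 5⁻ᵐ` at most `δ/10`.
-/

section FirstOccurrence

open Finset

variable {α : Type*} {n : ℕ}

def firstOcc (f : Fin n → α) (j : Fin n) : Fin n :=
  ({j' | f j' = f j} : Finset (Fin n)).min' ⟨j, by simp⟩

lemma apply_firstOcc (f : Fin n → α) (j : Fin n) : f (firstOcc f j) = f j :=
  (mem_filter.1 (min'_mem ({j' | f j' = f j} : Finset (Fin n)) _)).2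

lemma firstOcc_eq_firstOcc_iff {f : Fin n → α} {j j' : Fin n} :
    firstOcc f j = firstOcc f j' ↔ f j = f j' := by
  refine ⟨fun h => by rw [← apply_firstOcc f j, h, apply_firstOcc f j'], fun h => ?_⟩
  unfold firstOcc
  congr 1
  simp only [h]

def firstOccSet (f : Fin n → α) : Finset (Fin n) := univ.image (firstOcc f)

lemma firstOcc_mem_firstOccSet (f : Fin n → α) (j : Fin n) : firstOcc f j ∈ firstOccSet f :=
  mem_image_of_mem _ (mem_univ j)

lemma card_firstOccSet (f : Fin n → α) : #(firstOccSet f) = #(univ.image f) := by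
  have himage : (firstOccSet f).image f = univ.image f := by
    rw [firstOccSet, image_image]
    congr 1
    funext j
    exact apply_firstOcc f j
  rw [← himage, card_image_of_injOn]
  intro x hx y hy hxy
  obtain ⟨j, -, rfl⟩ := mem_image.1 (mem_coe.1 hx)
  obtain ⟨j', -, rfl⟩ := mem_image.1 (mem_coe.1 hy)
  rw [apply_firstOcc f j, apply_firstOcc f j'] at hxy
  exact firstOcc_eq_firstOcc_iff.2 hxy

/-- A function with prescribed first-occurrence set `S` is determined by its values on `S` and by
the first occurrence of the value at each position outside `S`. -/
lemma card_filter_firstOccSet_eq_le (A : Finset α) (S : Finset (Fin n)) :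
    #{f ∈ Fintype.piFinset (fun _ : Fin n => A) | firstOccSet f = S} ≤
      #A ^ #S * n ^ (n - #S) := by
  calc _ ≤ #(Fintype.piFinset (fun _ : S => A) ×ˢ (univ : Finset (↥Sᶜ → Fin n))) := by
        refine card_le_card_of_injOn (fun f => (fun j : S => f j, fun j : ↥Sᶜ => firstOcc f j))
          (fun f hf => ?_) (fun f₁ hf₁ f₂ hf₂ hf => ?_)
        · have hfA := Fintype.mem_piFinset.1 (mem_filter.1 hf).1
          simp [hfA]
        · have hS₁ := (mem_filter.1 hf₁).2
          have hS : ∀ i ∈ S, f₁ i = f₂ i := fun i hi => congrFun (congrArg Prod.fst hf) ⟨i, hi⟩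
          funext j
          by_cases hj : j ∈ S
          · exact hS j hj
          · have hc : firstOcc f₁ j = firstOcc f₂ j :=
              congrFun (congrArg Prod.snd hf) ⟨j, mem_compl.2 hj⟩
            rw [← apply_firstOcc f₁ j, ← apply_firstOcc f₂ j, ← hc]
            exact hS _ (hS₁ ▸ firstOcc_mem_firstOccSet f₁ j)
    _ = #A ^ #S * n ^ (n - #S) := by simp

def NoSingletonFibers (f : Fin n → α) : Prop := ∀ j, 2 ≤ #{j' | f j' = f j}

lemma two_mul_card_image_le {f : Fin n → α} (hf : NoSingletonFibers f) :
    2 * #(univ.image f) ≤ n :=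
  calc 2 * #(univ.image f) = ∑ _b ∈ univ.image f, 2 := by rw [sum_const, smul_eq_mul, mul_comm]
    _ ≤ ∑ b ∈ univ.image f, #{j | f j = b} := sum_le_sum fun b hb => by
        obtain ⟨j, -, rfl⟩ := mem_image.1 hb
        exact hf j
    _ = n := by rw [← card_eq_sum_card_image, card_univ, Fintype.card_fin]

lemma pow_mul_pow_two_mul_sub_le {x c : ℝ} (hx : 0 ≤ x) (hc : 0 ≤ c) {m r : ℕ} (hr : r ≤ m) :
    x ^ r * c ^ (2 * m - r) ≤ c ^ m * max x c ^ m := by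
  calc x ^ r * c ^ (2 * m - r) = x ^ r * c ^ (m - r) * c ^ m := by
        rw [mul_assoc, ← pow_add]; congr 2; omega
    _ ≤ max x c ^ r * max x c ^ (m - r) * c ^ m := by
        gcongr
        exacts [le_max_left _ _, le_max_right _ _]
    _ = c ^ m * max x c ^ m := by rw [← pow_add, Nat.add_sub_cancel' hr, mul_comm]

lemma sum_pow_card_image_le (A : Finset α) {p : ℝ} (hp : 0 ≤ p) (m : ℕ) :
    ∑ f ∈ Fintype.piFinset (fun _ : Fin (2 * m) => A) with NoSingletonFibers f,
        p ^ #(univ.image f) ≤ (8 * m * max (#A * p) (2 * m)) ^ m := by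
  set F := Fintype.piFinset fun _ : Fin (2 * m) => A
  set M := max ((#A : ℝ) * p) (2 * m)
  have hmaps : ∀ f ∈ {f ∈ F | NoSingletonFibers f},
      firstOccSet f ∈ ({S | #S ≤ m} : Finset (Finset (Fin (2 * m)))) := fun f hf => by
    have := two_mul_card_image_le (mem_filter.1 hf).2
    simp only [mem_filter, mem_univ, true_and, card_firstOccSet]
    omega
  rw [← sum_fiberwise_of_maps_to hmaps]
  calc _ ≤ ∑ S ∈ ({S | #S ≤ m} : Finset (Finset (Fin (2 * m)))), (2 * m : ℝ) ^ m * M ^ m := by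
        refine sum_le_sum fun S hS => ?_
        have hSm : #S ≤ m := (mem_filter.1 hS).2
        calc _ = ∑ f ∈ {f ∈ F | NoSingletonFibers f} with firstOccSet f = S, p ^ #S :=
              sum_congr rfl fun f hf => by rw [← (mem_filter.1 hf).2, card_firstOccSet]
          _ ≤ (#{f ∈ F | firstOccSet f = S} : ℝ) * p ^ #S := by
              rw [sum_const, nsmul_eq_mul]
              gcongr
              exact filter_subset _ _
          _ ≤ (#A ^ #S * (2 * m) ^ (2 * m - #S) : ℕ) * p ^ #S := by
              gcongr
              exact card_filter_firstOccSet_eq_le A S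
          _ = (#A * p) ^ #S * (2 * m : ℝ) ^ (2 * m - #S) := by push_cast; ring
          _ ≤ (2 * m : ℝ) ^ m * M ^ m :=
              pow_mul_pow_two_mul_sub_le (by positivity) (by positivity) hSm
    _ ≤ 2 ^ (2 * m) * ((2 * m : ℝ) ^ m * M ^ m) := by
        rw [sum_const, nsmul_eq_mul]
        gcongr
        exact_mod_cast (card_filter_le _ _).trans_eq (by simp)
    _ = (8 * m * M) ^ m := by
        rw [pow_mul, ← mul_pow, ← mul_pow]
        ring_nf

end FirstOccurrence

section Moments

open Finset ProbabilityTheory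

variable {Ω ι : Type*} [MeasurableSpace Ω] {P : Measure Ω}

lemma integral_finset_prod_comp_of_iIndepFun {s : Finset ι} {X : ι → Ω → ℝ}
    (hX : iIndepFun (fun i : s => X i) P) (hmeas : ∀ i ∈ s, Measurable (X i))
    {φ : ι → ℝ → ℝ} (hφ : ∀ i ∈ s, Measurable (φ i)) :
    ∫ ω, ∏ i ∈ s, φ i (X i ω) ∂P = ∏ i ∈ s, ∫ ω, φ i (X i ω) ∂P := by
  rw [← prod_coe_sort s fun i => ∫ ω, φ i (X i ω) ∂P,
    ← hX.integral_fun_prod_comp (fun i => (hmeas i i.2).aemeasurable)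
      (fun i => (hφ i i.2).aestronglyMeasurable)]
  congr with ω
  exact (prod_coe_sort s fun i => φ i (X i ω)).symm

lemma abs_sub_le_one_of_eq_zero_or_eq_one {x p : ℝ} (hx : x = 0 ∨ x = 1) (hp0 : 0 ≤ p)
    (hp1 : p ≤ 1) : |x - p| ≤ 1 := by
  rcases hx with rfl | rfl <;> rw [abs_le] <;> constructor <;> linarith

section Bernoulli

variable {h : Ω → ℝ} {p : ℝ}

lemma integrable_of_eq_zero_or_eq_one [IsFiniteMeasure P] (hmeas : Measurable h)
    (h01 : ∀ ω, h ω = 0 ∨ h ω = 1) : Integrable h P :=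
  .of_bound hmeas.aestronglyMeasurable 1
    (ae_of_all _ fun ω => by rcases h01 ω with hω | hω <;> simp [hω])

lemma integral_eq_of_bernoulli (hmeas : Measurable h) (h01 : ∀ ω, h ω = 0 ∨ h ω = 1)
    (hp : 0 ≤ p) (hPr : P {ω | h ω = 1} = ENNReal.ofReal p) : ∫ ω, h ω ∂P = p := by
  have hind : h = {ω | h ω = 1}.indicator fun _ => 1 := by
    funext ω
    rcases h01 ω with hω | hω <;> simp [hω]
  have hs : MeasurableSet {ω | h ω = 1} := hmeas (measurableSet_singleton 1)
  rw [hind, integral_indicator_const _ hs, smul_eq_mul, mul_one, measureReal_def, hPr,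
    ENNReal.toReal_ofReal hp]

lemma integral_sub_eq_zero_of_bernoulli [IsProbabilityMeasure P] (hmeas : Measurable h)
    (h01 : ∀ ω, h ω = 0 ∨ h ω = 1) (hp : 0 ≤ p) (hPr : P {ω | h ω = 1} = ENNReal.ofReal p) :
    ∫ ω, (h ω - p) ∂P = 0 := by
  rw [integral_sub (integrable_of_eq_zero_or_eq_one hmeas h01) (integrable_const p),
    integral_eq_of_bernoulli hmeas h01 hp hPr, integral_const, probReal_univ, one_smul, sub_self]

lemma abs_integral_sub_pow_le_of_bernoulli [IsProbabilityMeasure P] (hmeas : Measurable h)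
    (h01 : ∀ ω, h ω = 0 ∨ h ω = 1) (hp0 : 0 ≤ p) (hp1 : p ≤ 1)
    (hPr : P {ω | h ω = 1} = ENNReal.ofReal p) {k : ℕ} (hk : 2 ≤ k) :
    |∫ ω, (h ω - p) ^ k ∂P| ≤ p := by
  have hbound : ∀ ω, |h ω - p| ≤ 1 := fun ω =>
    abs_sub_le_one_of_eq_zero_or_eq_one (h01 ω) hp0 hp1
  have hint : ∀ j : ℕ, Integrable (fun ω => (h ω - p) ^ j) P := fun j =>
    .of_bound ((hmeas.sub_const p).pow_const j).aestronglyMeasurable 1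
      (ae_of_all _ fun ω => by
        rw [Real.norm_eq_abs, abs_pow]
        exact pow_le_one₀ (abs_nonneg _) (hbound ω))
  -- `h² = h` makes the variance an affine function of `h`
  have hvar : ∫ ω, (h ω - p) ^ 2 ∂P = p - p ^ 2 := by
    have haff : (fun ω => (h ω - p) ^ 2) = fun ω => (1 - 2 * p) * h ω + p ^ 2 := by
      funext ω
      rcases h01 ω with hω | hω <;> rw [hω] <;> ring
    rw [haff, integral_add ((integrable_of_eq_zero_or_eq_one hmeas h01).const_mul _)
      (integrable_const _), integral_const_mul, integral_eq_of_bernoulli hmeas h01 hp0 hPr,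
      integral_const, probReal_univ, one_smul]
    ring
  calc |∫ ω, (h ω - p) ^ k ∂P| ≤ ∫ ω, |(h ω - p) ^ k| ∂P := abs_integral_le_integral_abs
    _ ≤ ∫ ω, (h ω - p) ^ 2 ∂P := integral_mono (hint k).abs (hint 2) fun ω => by
        rw [abs_pow, ← sq_abs (h ω - p)]
        exact pow_le_pow_of_le_one (abs_nonneg _) (hbound ω) hk
    _ ≤ p := by nlinarith [hvar]

end Bernoulli

variable [IsProbabilityMeasure P] {α : Type*} {A : Finset α} {h : α → Ω → ℝ} {p : ℝ}

theorem integral_sum_sub_pow_le (hmeas : ∀ a ∈ A, Measurable (h a))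
    (h01 : ∀ a ∈ A, ∀ ω, h a ω = 0 ∨ h a ω = 1) (hp0 : 0 ≤ p) (hp1 : p ≤ 1)
    (hPr : ∀ a ∈ A, P {ω | h a ω = 1} = ENNReal.ofReal p) (m : ℕ)
    (hind : ∀ s ⊆ A, #s ≤ 2 * m → iIndepFun (fun a : s => h a) P) :
    ∫ ω, (∑ a ∈ A, (h a ω - p)) ^ (2 * m) ∂P ≤ (8 * m * max (#A * p) (2 * m)) ^ m := by
  set F := Fintype.piFinset fun _ : Fin (2 * m) => A
  have hFA : ∀ f ∈ F, ∀ j, f j ∈ A := fun f hf => Fintype.mem_piFinset.1 hf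
  have hfactor : ∀ f ∈ F, ∫ ω, ∏ j, (h (f j) ω - p) ∂P =
      ∏ b ∈ univ.image f, ∫ ω, (h b ω - p) ^ #{j | f j = b} ∂P := fun f hf => by
    have hfA : univ.image f ⊆ A := by simpa [image_subset_iff] using hFA f hf
    have hgroup : ∀ ω, ∏ j, (h (f j) ω - p) = ∏ b ∈ univ.image f, (h b ω - p) ^ #{j | f j = b} :=
      fun ω => prod_comp (fun b => h b ω - p) f
    simp_rw [hgroup]
    exact integral_finset_prod_comp_of_iIndepFun
      (hind _ hfA (card_image_le.trans (by simp))) (fun b hb => hmeas b (hfA hb))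
      (fun b _ => (measurable_id.sub_const p).pow_const _)
  have hvanish : ∀ f ∈ F, ∫ ω, ∏ j, (h (f j) ω - p) ∂P ≠ 0 → NoSingletonFibers f := by
    intro f hf hne j
    by_contra! hj
    refine hne ((hfactor f hf).trans (prod_eq_zero (mem_image_of_mem f (mem_univ j)) ?_))
    have hone : #{j' | f j' = f j} = 1 := le_antisymm (by omega) (card_pos.2 ⟨j, by simp⟩)
    simpa only [hone, pow_one] using integral_sub_eq_zero_of_bernoulli (hmeas _ (hFA f hf j))
      (h01 _ (hFA f hf j)) hp0 (hPr _ (hFA f hf j))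
  have hint : ∀ f ∈ F, Integrable (fun ω => ∏ j, (h (f j) ω - p)) P := fun f hf =>
    .of_bound (Finset.measurable_prod _ fun j _ =>
        (hmeas _ (hFA f hf j)).sub_const p).aestronglyMeasurable 1
      (ae_of_all _ fun ω => by
        rw [Real.norm_eq_abs, abs_prod]
        exact prod_le_one (fun _ _ => abs_nonneg _) fun j _ =>
          abs_sub_le_one_of_eq_zero_or_eq_one (h01 _ (hFA f hf j) ω) hp0 hp1)
  calc ∫ ω, (∑ a ∈ A, (h a ω - p)) ^ (2 * m) ∂P
      = ∑ f ∈ F with NoSingletonFibers f, ∫ ω, ∏ j, (h (f j) ω - p) ∂P := by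
        simp_rw [sum_pow']
        rw [integral_finsetSum _ hint, sum_filter_of_ne hvanish]
    _ ≤ ∑ f ∈ F with NoSingletonFibers f, p ^ #(univ.image f) := sum_le_sum fun f hf => by
        obtain ⟨hfF, hns⟩ := mem_filter.1 hf
        rw [hfactor f hfF, ← prod_const]
        refine (le_abs_self _).trans ?_
        rw [abs_prod]
        refine prod_le_prod (fun _ _ => abs_nonneg _) fun b hb => ?_
        obtain ⟨j, -, rfl⟩ := mem_image.1 hb
        exact abs_integral_sub_pow_le_of_bernoulli (hmeas _ (hFA f hfF j))
          (h01 _ (hFA f hfF j)) hp0 hp1 (hPr _ (hFA f hfF j)) (hns j)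
    _ ≤ (8 * m * max (#A * p) (2 * m)) ^ m := sum_pow_card_image_le A hp0 m

theorem measure_lt_abs_sum_sub_le (hmeas : ∀ a ∈ A, Measurable (h a))
    (h01 : ∀ a ∈ A, ∀ ω, h a ω = 0 ∨ h a ω = 1) (hp0 : 0 ≤ p) (hp1 : p ≤ 1)
    (hPr : ∀ a ∈ A, P {ω | h a ω = 1} = ENNReal.ofReal p) (m : ℕ)
    (hind : ∀ s ⊆ A, #s ≤ 2 * m → iIndepFun (fun a : s => h a) P) {t : ℝ} (ht : 0 < t)
    (ht2 : 40 * m * max (#A * p) (2 * m) ≤ t ^ 2) :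
    P {ω | t < |(∑ a ∈ A, h a ω) - #A * p|} ≤ ENNReal.ofReal ((1 / 5) ^ m) := by
  set F : Ω → ℝ := fun ω => (∑ a ∈ A, (h a ω - p)) ^ (2 * m)
  have hF : ∀ ω, F ω = |(∑ a ∈ A, h a ω) - #A * p| ^ (2 * m) := fun ω => by
    simp [F, sum_sub_distrib, (even_two_mul m).pow_abs]
  have hFint : Integrable F P := by
    refine .of_bound ((Finset.measurable_sum _ fun a ha => (hmeas a ha).sub_const p).pow_const
      _).aestronglyMeasurable ((#A : ℝ) ^ (2 * m)) (ae_of_all _ fun ω => ?_)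
    rw [Real.norm_eq_abs, abs_pow]
    gcongr
    refine (abs_sum_le_sum_abs _ _).trans ?_
    simpa using sum_le_sum fun a ha => abs_sub_le_one_of_eq_zero_or_eq_one (h01 a ha ω) hp0 hp1
  have hmoment : ∫ ω, F ω ∂P ≤ t ^ (2 * m) * (1 / 5) ^ m :=
    calc ∫ ω, F ω ∂P ≤ (8 * m * max (#A * p) (2 * m)) ^ m :=
          integral_sum_sub_pow_le hmeas h01 hp0 hp1 hPr m hind
      _ ≤ (t ^ 2 * (1 / 5)) ^ m := pow_le_pow_left₀ (by positivity) (by linarith) m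
      _ = t ^ (2 * m) * (1 / 5) ^ m := by rw [mul_pow, pow_mul]
  have hmarkov := mul_meas_ge_le_integral_of_nonneg
    (ae_of_all _ fun ω => (even_two_mul m).pow_nonneg _) hFint (t ^ (2 * m))
  have hreal : P.real {ω | t ^ (2 * m) ≤ F ω} ≤ (1 / 5) ^ m :=
    le_of_mul_le_mul_left (hmarkov.trans hmoment) (by positivity)
  calc P {ω | t < |(∑ a ∈ A, h a ω) - #A * p|} ≤ P {ω | t ^ (2 * m) ≤ F ω} :=
        measure_mono fun ω hω => by
          show _ ≤ F ω
          rw [hF]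
          exact pow_le_pow_left₀ ht.le (le_of_lt hω) _
    _ = ENNReal.ofReal (P.real {ω | t ^ (2 * m) ≤ F ω}) := (ofReal_measureReal).symm
    _ ≤ ENNReal.ofReal ((1 / 5) ^ m) := ENNReal.ofReal_le_ofReal hreal

end Moments

/-- The product of the two candidate deviations is `40 λ μ`, so their maximum squared dominates
`20 λ μ`; the additive one alone dominates `20 λ²`. -/
lemma twenty_mul_max_le_sq_max {ε lam μ : ℝ} (hε0 : 0 < ε) (hε1 : ε ≤ 1) (hlam : 0 ≤ lam)
    (hμ : 0 ≤ μ) :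
    20 * lam * max μ lam ≤ max (4 * 10 ^ 3 * ε⁻¹ * lam) (0.01 * ε * μ) ^ 2 := by
  set a := 4 * 10 ^ 3 * ε⁻¹ * lam
  set b := 0.01 * ε * μ
  have ha : 0 ≤ a := by positivity
  have hb : 0 ≤ b := by positivity
  have hab : a * b = 40 * lam * μ := by
    simp only [a, b]
    field_simp
    ring
  have hab_le : a * b ≤ max a b ^ 2 :=
    sq (max a b) ▸ mul_le_mul (le_max_left _ _) (le_max_right _ _) hb (ha.trans (le_max_left _ _))
  have hε_inv : 1 ≤ ε⁻¹ := (one_le_inv₀ hε0).2 hε1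
  have ha_sq : 40 * lam ^ 2 ≤ a ^ 2 := by
    simp only [a]
    nlinarith [sq_nonneg lam, mul_le_mul hε_inv hε_inv zero_le_one (by linarith)]
  have ha_le : a ^ 2 ≤ max a b ^ 2 := pow_le_pow_left₀ ha (le_max_left _ _) 2
  calc 20 * lam * max μ lam ≤ 20 * lam * (μ + lam) := by
        gcongr
        exact max_le_add_of_nonneg hμ hlam
    _ = a * b / 2 + 20 * lam ^ 2 := by rw [hab]; ring
    _ ≤ max a b ^ 2 := by linarith

/-- `5⁻ᵐ ≤ 2^(-2m) ≤ 2^(-log₂(1/δ)) · 2^(-(L+4)) = δ / 2^(L+4)`, and `L + 1 ≤ 2^L`. -/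
lemma succ_mul_inv_five_pow_le {L m : ℕ} {δ : ℝ} (hδ0 : 0 < δ) (hδ1 : δ ≤ 1)
    (h : 10 * ((L : ℝ) + Real.logb 2 (1 / δ) + 1) ≤ 2 * m) :
    ((L : ℝ) + 1) * (1 / 5) ^ m ≤ δ / 10 := by
  set R := Real.logb 2 (1 / δ)
  have hR : 0 ≤ R := Real.logb_nonneg one_lt_two (by rw [le_div_iff₀ hδ0]; linarith)
  have h2R : (2 : ℝ) ^ (-R) = δ := by
    rw [Real.rpow_neg zero_le_two, Real.rpow_logb zero_lt_two (by norm_num) (by positivity),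
      one_div, inv_inv]
  have hfive : (1 / 5 : ℝ) ^ m ≤ 2 ^ (-(2 * m : ℝ)) := by
    rw [Real.rpow_neg zero_le_two, show (2 * m : ℝ) = ((2 * m : ℕ) : ℝ) by push_cast; ring,
      Real.rpow_natCast, pow_mul, ← inv_pow, one_div]
    gcongr
    norm_num
  have hexp : (2 : ℝ) ^ (-(2 * m : ℝ)) ≤ δ * ((2 : ℝ) ^ (L + 4))⁻¹ := by
    calc (2 : ℝ) ^ (-(2 * m : ℝ)) ≤ 2 ^ (-R + -((L + 4 : ℕ) : ℝ)) :=
          Real.rpow_le_rpow_of_exponent_le one_le_two (by push_cast; linarith)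
      _ = δ * ((2 : ℝ) ^ (L + 4))⁻¹ := by
          rw [Real.rpow_add zero_lt_two, h2R, Real.rpow_neg zero_le_two, Real.rpow_natCast]
  have hL : (L : ℝ) + 1 ≤ 2 ^ L := by exact_mod_cast Nat.lt_two_pow_self
  calc ((L : ℝ) + 1) * (1 / 5) ^ m ≤ 2 ^ L * (δ * ((2 : ℝ) ^ (L + 4))⁻¹) := by
        gcongr
        exact hfive.trans hexp
    _ = δ / 16 := by rw [pow_add]; field_simp; norm_num
    _ ≤ δ / 10 := by linarith

section Levels

open Finset ProbabilityTheory

def AddOrMulApprox (x μ a c : ℝ) : Prop :=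
  |x - μ| ≤ a ∨ ((1 - c) * μ ≤ x ∧ x ≤ (1 + c) * μ)

lemma addOrMulApprox_of_abs_sub_le_max {x μ a c : ℝ} (h : |x - μ| ≤ max a (c * μ)) :
    AddOrMulApprox x μ a c := by
  rcases le_max_iff.1 h with h | h
  · exact Or.inl h
  · rw [abs_le] at h
    exact Or.inr ⟨by linarith, by linarith⟩

variable {Ω α : Type*} [MeasurableSpace Ω] {P : Measure Ω} [IsProbabilityMeasure P]

lemma ofReal_one_sub_le_measure_of_compl_subset {s : Set Ω} {B : ℕ → Set Ω} {n : ℕ} {b q : ℝ}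
    (hb : 0 ≤ b) (hbq : n * b ≤ q) (hB : ∀ i ∈ range n, P (B i) ≤ ENNReal.ofReal b)
    (hs : sᶜ ⊆ ⋃ i ∈ range n, B i) : ENNReal.ofReal (1 - q) ≤ P s := by
  have hcompl : P sᶜ ≤ ENNReal.ofReal q :=
    calc P sᶜ ≤ ∑ i ∈ range n, P (B i) := (measure_mono hs).trans (measure_biUnion_finset_le _ _)
      _ ≤ ∑ _i ∈ range n, ENNReal.ofReal b := sum_le_sum hB
      _ = ENNReal.ofReal (n * b) := by
          rw [sum_const, card_range, nsmul_eq_mul, ENNReal.ofReal_mul (by positivity),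
            ENNReal.ofReal_natCast]
      _ ≤ ENNReal.ofReal q := ENNReal.ofReal_le_ofReal hbq
  rw [ENNReal.ofReal_sub _ ((by positivity : (0 : ℝ) ≤ n * b).trans hbq), ENNReal.ofReal_one,
    tsub_le_iff_right]
  calc 1 = P (s ∪ sᶜ) := by rw [Set.union_compl_self, measure_univ]
    _ ≤ P s + P sᶜ := measure_union_le _ _
    _ ≤ P s + ENNReal.ofReal q := by gcongr

theorem measure_not_addOrMulApprox_le {A : Finset α} {h : α → Ω → ℝ} {p : ℝ}
    (hmeas : ∀ a ∈ A, Measurable (h a)) (h01 : ∀ a ∈ A, ∀ ω, h a ω = 0 ∨ h a ω = 1)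
    (hp0 : 0 ≤ p) (hp1 : p ≤ 1) (hPr : ∀ a ∈ A, P {ω | h a ω = 1} = ENNReal.ofReal p)
    {lam m : ℕ} (hlam : lam = 2 * m) (hm : 0 < m)
    (hind : ∀ s ⊆ A, #s ≤ lam → iIndepFun (fun a : s => h a) P) {ε : ℝ} (hε0 : 0 < ε)
    (hε1 : ε ≤ 1) :
    P {ω | ¬ AddOrMulApprox (∑ a ∈ A, h a ω) (#A * p) (4 * 10 ^ 3 * ε⁻¹ * lam) (0.01 * ε)} ≤
      ENNReal.ofReal ((1 / 5) ^ m) := by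
  subst hlam
  have hsq := twenty_mul_max_le_sq_max hε0 hε1 (by positivity : (0 : ℝ) ≤ 2 * m)
    (by positivity : (0 : ℝ) ≤ #A * p)
  refine (measure_mono fun ω hω => ?_).trans
    (measure_lt_abs_sum_sub_le hmeas h01 hp0 hp1 hPr m hind
      (t := max (4 * 10 ^ 3 * ε⁻¹ * (2 * m : ℕ)) (0.01 * ε * (#A * p))) (lt_max_of_lt_left ?_) ?_)
  · exact not_le.1 (mt addOrMulApprox_of_abs_sub_le_max hω)
  · positivity
  · push_cast
    linarith

end Levels

open ProbabilityTheory in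
theorem level_sample_concentration_general
    (d k L Δ : ℕ) (hd : 1 ≤ d)
    (v : Pt d) (Q : Finset (Pt d))
    (o : ℝ)
    (zhat : ℤ → (Fin d → ℤ) → ℝ)
    (ε : ℝ) (hε0 : 0 < ε) (hε1 : ε < 1 / 2)
    (δ : ℝ) (hδ0 : 0 < δ) (hδ1 : δ < 1 / 2)
    (lam : ℕ) (hlamEven : Even lam) (hlamPos : 0 < lam)
    (hlam : 10 * ((d : ℝ) * (L : ℝ) + Real.logb 2 (1 / δ) + 1) ≤ (lam : ℝ))
    {Ω : Type} [MeasurableSpace Ω] (P : Measure Ω) [IsProbabilityMeasure P]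
    (h' : ℕ → Pt d → Ω → ℝ)
    (hmeas : ∀ i : ℕ, ∀ p : Pt d, Measurable (h' i p))
    (h01 : ∀ i : ℕ, i ≤ L → ∀ p ∈ Q, ∀ ω : Ω, h' i p ω = 0 ∨ h' i p ω = 1)
    (hprob : ∀ i : ℕ, i ≤ L → ∀ p ∈ Q,
      P {ω | h' i p ω = 1} =
        ENNReal.ofReal (min
          (4 * 10 ^ 4 * ε⁻¹ ^ 2 * (gammaPar d L ε)⁻¹ * (lam : ℝ) / Tthr d k Δ o i) 1))
    (hindep : ∀ i : ℕ, i ≤ L → ∀ s : Finset (Pt d), s ⊆ Q → s.card ≤ lam →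
      iIndepFun
        (fun p : ↥s => h' i ↑p) P) :
    ENNReal.ofReal (1 - δ / 10) ≤
      P {ω | ∀ i : ℕ, i ≤ L →
        4 * 10 ^ 4 * ε⁻¹ ^ 2 * (gammaPar d L ε)⁻¹ * (lam : ℝ) ≤ Tthr d k Δ o i →
          (|(∑ p ∈ Qlevel d k L Δ Q v o zhat i, h' i p ω) -
              ((Qlevel d k L Δ Q v o zhat i).card : ℝ) *
                (4 * 10 ^ 4 * ε⁻¹ ^ 2 * (gammaPar d L ε)⁻¹ * (lam : ℝ) /
                  Tthr d k Δ o i)| ≤ 4 * 10 ^ 3 * ε⁻¹ * (lam : ℝ)) ∨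
          ((1 - 0.01 * ε) * (((Qlevel d k L Δ Q v o zhat i).card : ℝ) *
                (4 * 10 ^ 4 * ε⁻¹ ^ 2 * (gammaPar d L ε)⁻¹ * (lam : ℝ) /
                  Tthr d k Δ o i)) ≤
              (∑ p ∈ Qlevel d k L Δ Q v o zhat i, h' i p ω) ∧
            (∑ p ∈ Qlevel d k L Δ Q v o zhat i, h' i p ω) ≤
              (1 + 0.01 * ε) * (((Qlevel d k L Δ Q v o zhat i).card : ℝ) *
                (4 * 10 ^ 4 * ε⁻¹ ^ 2 * (gammaPar d L ε)⁻¹ * (lam : ℝ) /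
                  Tthr d k Δ o i)))} := by
  obtain ⟨m, hm⟩ := hlamEven
  set C := 4 * 10 ^ 4 * ε⁻¹ ^ 2 * (gammaPar d L ε)⁻¹ * (lam : ℝ)
  have hC : 0 ≤ C := by unfold C gammaPar; positivity
  set B : ℕ → Set Ω := fun i => {ω | C ≤ Tthr d k Δ o i ∧
    ¬ AddOrMulApprox (∑ p ∈ Qlevel d k L Δ Q v o zhat i, h' i p ω)
      ((Qlevel d k L Δ Q v o zhat i).card * (C / Tthr d k Δ o i)) (4 * 10 ^ 3 * ε⁻¹ * lam)
      (0.01 * ε)}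
  have hB : ∀ i ∈ Finset.range (L + 1), P (B i) ≤ ENNReal.ofReal ((1 / 5) ^ m) := by
    intro i hi
    have hiL : i ≤ L := Nat.lt_succ_iff.1 (Finset.mem_range.1 hi)
    have hQi : Qlevel d k L Δ Q v o zhat i ⊆ Q := Finset.filter_subset _ _
    by_cases hCT : C ≤ Tthr d k Δ o i
    · have hp1 : C / Tthr d k Δ o i ≤ 1 := div_le_one_of_le₀ hCT (hC.trans hCT)
      refine (measure_mono fun ω hω => hω.2).trans (measure_not_addOrMulApprox_le
        (fun a _ => hmeas i a) (fun a ha => h01 i hiL a (hQi ha))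
        (div_nonneg hC (hC.trans hCT)) hp1 (fun a ha => ?_) (by omega) (by omega)
        (fun s hs => hindep i hiL s (hs.trans hQi)) hε0 (by linarith))
      rw [hprob i hiL a (hQi ha), min_eq_left hp1]
    · simp [B, hCT]
  refine ofReal_one_sub_le_measure_of_compl_subset (n := L + 1) (by positivity) ?_ hB ?_
  · have hdL : (L : ℝ) ≤ d * L := le_mul_of_one_le_left (by positivity) (by exact_mod_cast hd)
    have hlam2 : (lam : ℝ) = 2 * m := by rw [hm]; push_cast; ring
    push_cast
    exact succ_mul_inv_five_pow_le hδ0 (by linarith) (by linarith)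
  · intro ω hω
    by_contra hU
    refine hω fun i hi hCT => ?_
    by_contra hbad
    exact hU (Set.mem_iUnion₂.2 ⟨i, Finset.mem_range.2 (by omega), hCT, hbad⟩)

open ProbabilityTheory in
/-- for λ-wise independent Bernoulli samples `h′_i(p)` with success
probability `min(4·10⁴·ε⁻²·γ⁻¹·λ/T_i(o), 1)`, with probability at least `1 − δ/10`,
simultaneously for every level `i` with `T_i(o) ≥ 4·10⁴·ε⁻²·γ⁻¹·λ`, the sample count
`Σ_{p∈Q_i} h′_i(p)` is within additive error `4·10³·ε⁻¹·λ` or within multiplicative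
error `1 ± 0.01·ε` of its mean `|Q_i|·4·10⁴·ε⁻²·γ⁻¹·λ/T_i(o)`. -/
theorem level_sample_concentration
    (d k L Δ : ℕ) (hd : 1 ≤ d) (hk : 1 ≤ k) (hL : 1 ≤ L) (hΔ : Δ = 2 ^ L)
    (v : Pt d) (Q : Finset (Pt d))
    (hQ : ∀ p ∈ Q, ∀ α : Fin d, ∃ m : ℤ, 1 ≤ m ∧ m ≤ (Δ : ℤ) ∧ p α = (m : ℝ))
    (o : ℝ) (ho : 0 < o)
    (zhat : ℤ → (Fin d → ℤ) → ℝ)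
    (hz : ZhatAccurate d k L Δ Q v o zhat)
    (ε : ℝ) (hε0 : 0 < ε) (hε1 : ε < 1 / 2)
    (δ : ℝ) (hδ0 : 0 < δ) (hδ1 : δ < 1 / 2)
    (lam : ℕ) (hlamEven : Even lam) (hlamPos : 0 < lam)
    (hlam : 10 * ((d : ℝ) * (L : ℝ) + Real.logb 2 (1 / δ) + 1) ≤ (lam : ℝ))
    {Ω : Type} [MeasurableSpace Ω] (P : Measure Ω) [IsProbabilityMeasure P]
    (h' : ℕ → Pt d → Ω → ℝ)
    (hmeas : ∀ i : ℕ, ∀ p : Pt d, Measurable (h' i p))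
    (h01 : ∀ i : ℕ, i ≤ L → ∀ p ∈ Q, ∀ ω : Ω, h' i p ω = 0 ∨ h' i p ω = 1)
    (hprob : ∀ i : ℕ, i ≤ L → ∀ p ∈ Q,
      P {ω | h' i p ω = 1} =
        ENNReal.ofReal (min
          (4 * 10 ^ 4 * ε⁻¹ ^ 2 * (gammaPar d L ε)⁻¹ * (lam : ℝ) / Tthr d k Δ o i) 1))
    (hindep : ∀ i : ℕ, i ≤ L → ∀ s : Finset (Pt d), s ⊆ Q → s.card ≤ lam →
      iIndepFun
        (fun p : ↥s => h' i ↑p) P) :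
    ENNReal.ofReal (1 - δ / 10) ≤
      P {ω | ∀ i : ℕ, i ≤ L →
        4 * 10 ^ 4 * ε⁻¹ ^ 2 * (gammaPar d L ε)⁻¹ * (lam : ℝ) ≤ Tthr d k Δ o i →
          (|(∑ p ∈ Qlevel d k L Δ Q v o zhat i, h' i p ω) -
              ((Qlevel d k L Δ Q v o zhat i).card : ℝ) *
                (4 * 10 ^ 4 * ε⁻¹ ^ 2 * (gammaPar d L ε)⁻¹ * (lam : ℝ) /
                  Tthr d k Δ o i)| ≤ 4 * 10 ^ 3 * ε⁻¹ * (lam : ℝ)) ∨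
          ((1 - 0.01 * ε) * (((Qlevel d k L Δ Q v o zhat i).card : ℝ) *
                (4 * 10 ^ 4 * ε⁻¹ ^ 2 * (gammaPar d L ε)⁻¹ * (lam : ℝ) /
                  Tthr d k Δ o i)) ≤
              (∑ p ∈ Qlevel d k L Δ Q v o zhat i, h' i p ω) ∧
            (∑ p ∈ Qlevel d k L Δ Q v o zhat i, h' i p ω) ≤
              (1 + 0.01 * ε) * (((Qlevel d k L Δ Q v o zhat i).card : ℝ) *
                (4 * 10 ^ 4 * ε⁻¹ ^ 2 * (gammaPar d L ε)⁻¹ * (lam : ℝ) /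
                  Tthr d k Δ o i)))} :=
  level_sample_concentration_general d k L Δ hd v Q o zhat ε hε0 hε1 δ hδ0 hδ1 lam hlamEven hlamPos
    hlam P h' hmeas h01 hprob hindep
end
end
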